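/- arXiv:math/0212347 — 8 statements merged into one kernel-verified Lean document; each statement's English description precedes it below -/
import Mathlib

section
/- Let f(x_1,...,x_m) be a symmetric polynomial over the complex numbers such that f vanishes whenever s of its arguments are all equal to a fixed constant a (i.e. f(a,...,a,x_{s+1},...,x_m)=0 identically). Then the one-variable polynomial f(x,x,...,x) is divisible by (x-a)^{m-s+1}. -/
/-!
The shifted polynomial `g(x) = f(x + a)` is symmetric and vanishes when `x_1 = ⋯ = x_s = 0`.
A monomial of `g` in at most `m - s` variables could be moved by a permutation onto
`x_{s+1}, …, x_m`, where that substitution leaves its coefficient untouched; by symmetry the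
coefficient would then vanish. So every monomial of `g` involves at least `m - s + 1` variables,
hence has degree at least `m - s + 1`, and `x ^ (m - s + 1)` divides
`g(x, …, x) = f(x + a, …, x + a)`.
-/

open Finset MvPolynomial

namespace MvPolynomial

variable {σ R : Type*}

section CommSemiring

variable [CommSemiring R]

lemma aeval_ite_zero_X_eq_rename_killCompl (p : σ → Prop) [DecidablePred p] :
    aeval (fun i => if p i then 0 else X i) =
      (rename (Subtype.val : {i // ¬ p i} → σ)).comp
        (killCompl (R := R) Subtype.val_injective) := by
  refine algHom_ext fun i => ?_
  by_cases hi : p i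
  · simp [killCompl, hi]
  · simpa [killCompl, hi] using
      congrArg (X ∘ Subtype.val) (Equiv.ofInjective_symm_apply Subtype.val_injective ⟨i, hi⟩).symm

lemma coeff_aeval_ite_zero_X (p : σ → Prop) [DecidablePred p] (f : MvPolynomial σ R)
    {β : σ →₀ ℕ} (hβ : ∀ i, p i → β i = 0) :
    coeff β (aeval (fun i => if p i then 0 else X i) f) = coeff β f := by
  have hrange : ↑β.support ⊆ Set.range (Subtype.val : {i // ¬ p i} → σ) :=
    fun i hi => ⟨⟨i, fun h => Finsupp.mem_support_iff.mp hi (hβ i h)⟩, rfl⟩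
  rw [aeval_ite_zero_X_eq_rename_killCompl, AlgHom.comp_apply,
    ← Finsupp.mapDomain_comapDomain _ Subtype.val_injective β hrange,
    coeff_rename_mapDomain _ Subtype.val_injective, coeff_killCompl]

lemma coeff_mapDomain_of_isSymmetric {f : MvPolynomial σ R} (hf : f.IsSymmetric)
    (τ : Equiv.Perm σ) (α : σ →₀ ℕ) : coeff (α.mapDomain τ) f = coeff α f := by
  conv_lhs => rw [← hf τ]
  exact coeff_rename_mapDomain τ τ.injective f α

lemma card_lt_card_support_of_isSymmetric [Fintype σ] {f : MvPolynomial σ R}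
    (hf : f.IsSymmetric) (p : σ → Prop) [DecidablePred p]
    (hvan : aeval (fun i => if p i then (0 : MvPolynomial σ R) else X i) f = 0)
    {α : σ →₀ ℕ} (hα : α ∈ f.support) :
    #{i | ¬ p i} < #α.support := by
  classical
  by_contra! hcard
  obtain ⟨T, hT, hTcard⟩ := exists_subset_card_eq hcard
  obtain ⟨τ, hτ⟩ := Equiv.Perm.exists_map_finset_eq α.support T hTcard.symm
  have hβ : ∀ i, p i → α.mapDomain τ i = 0 := by
    intro i hi
    by_contra hne
    obtain ⟨j, hj, rfl⟩ := mem_image.mp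
      (Finsupp.mapDomain_support (Finsupp.mem_support_iff.mpr hne))
    have hτj : τ j ∈ T := hτ ▸ mem_map_of_mem τ.toEmbedding hj
    simpa [hi] using hT hτj
  apply mem_support_iff.mp hα
  rw [← coeff_mapDomain_of_isSymmetric hf τ, ← coeff_aeval_ite_zero_X p f hβ, hvan, coeff_zero]

lemma pow_dvd_aeval_const {S : Type*} [CommSemiring S] [Algebra R S] (f : MvPolynomial σ R)
    (r : S) {n : ℕ} (hn : ∀ α ∈ f.support, n ≤ α.degree) : r ^ n ∣ aeval (fun _ => r) f := by
  rw [f.as_sum, map_sum]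
  refine dvd_sum fun α hα => ?_
  rw [aeval_monomial, Finsupp.prod, prod_pow_eq_pow_sum, ← Finsupp.degree_apply]
  exact (pow_dvd_pow r (hn α hα)).mul_left _

end CommSemiring

section CommRing

variable [CommRing R]

lemma isSymmetric_aeval_X_add_C {f : MvPolynomial σ R} (hf : f.IsSymmetric) (a : R) :
    (aeval (fun i => X i + C a) f).IsSymmetric := by
  intro τ
  rw [← AlgHom.comp_apply, comp_aeval]
  simp only [map_add, rename_X, rename_C]
  rw [show (fun i => X (τ i) + C a) = (fun i => X i + C a) ∘ τ from rfl, ← aeval_rename, hf τ]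

lemma aeval_ite_zero_X_aeval_X_add_C (p : σ → Prop) [DecidablePred p] (a : R)
    (f : MvPolynomial σ R) :
    aeval (fun i => if p i then 0 else X i) (aeval (fun i => X i + C a) f) =
      aeval (fun i => X i + C a) (aeval (fun i => if p i then C a else X i) f) := by
  simp only [← AlgHom.comp_apply, comp_aeval]
  congr 2
  funext i
  by_cases hi : p i <;> simp [hi]

lemma aeval_X_sub_C_aeval_X_add_C (a : R) (f : MvPolynomial σ R) :
    aeval (fun _ => Polynomial.X - Polynomial.C a) (aeval (fun i => X i + C a) f) =
      aeval (fun _ => Polynomial.X) f := by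
  rw [← AlgHom.comp_apply, comp_aeval]
  congr 2
  funext i
  simp

end CommRing

end MvPolynomial

lemma Finsupp.card_support_le_degree {σ : Type*} (α : σ →₀ ℕ) : #α.support ≤ α.degree := by
  rw [Finset.card_eq_sum_ones, degree_apply]
  exact Finset.sum_le_sum fun i hi => Nat.one_le_iff_ne_zero.mpr (mem_support_iff.mp hi)

theorem diagonal_divisibility_general (m s : ℕ) (a : ℂ)
    (f : MvPolynomial (Fin m) ℂ) (hsym : f.IsSymmetric)
    (hvan : aeval (fun i : Fin m =>
      if (i : ℕ) < s then (C a : MvPolynomial (Fin m) ℂ) else X i) f = 0) :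
    (Polynomial.X - Polynomial.C a) ^ (m - s + 1) ∣
      aeval (fun _ : Fin m => (Polynomial.X : Polynomial ℂ)) f := by
  set g : MvPolynomial (Fin m) ℂ := aeval (fun i => X i + C a) f
  have hg_van : aeval (fun i : Fin m =>
      if (i : ℕ) < s then (0 : MvPolynomial (Fin m) ℂ) else X i) g = 0 := by
    rw [aeval_ite_zero_X_aeval_X_add_C, hvan, map_zero]
  have hcard : #{i : Fin m | ¬ (i : ℕ) < s} = m - s := by
    have hsplit := card_filter_add_card_filter_not (s := univ) fun i : Fin m => (i : ℕ) < s
    rw [Fin.card_filter_val_lt, card_univ, Fintype.card_fin] at hsplit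
    omega
  rw [← aeval_X_sub_C_aeval_X_add_C a f]
  refine pow_dvd_aeval_const g _ fun α hα => ?_
  have hvars := card_lt_card_support_of_isSymmetric (isSymmetric_aeval_X_add_C hsym a) _ hg_van hα
  have hdeg := α.card_support_le_degree
  omega

/-- If a symmetric polynomial `f` in `m` variables over `ℂ` vanishes
whenever `s` of its arguments are all equal to the constant `a` (i.e. substituting
`x_1 = ⋯ = x_s = a` yields the zero polynomial in the remaining variables), then the
one-variable polynomial `f(x, x, …, x)` is divisible by `(x - a)^(m - s + 1)`. -/
theorem diagonal_divisibility (m s : ℕ) (hs : 1 ≤ s) (hsm : s ≤ m) (a : ℂ)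
    (f : MvPolynomial (Fin m) ℂ) (hsym : f.IsSymmetric)
    (hvan : aeval (fun i : Fin m =>
      if (i : ℕ) < s then (C a : MvPolynomial (Fin m) ℂ) else X i) f = 0) :
    (Polynomial.X - Polynomial.C a) ^ (m - s + 1) ∣
      aeval (fun _ : Fin m => (Polynomial.X : Polynomial ℂ)) f :=
  diagonal_divisibility_general m s a f hsym hvan
end

section
/- The pairing between the polynomial algebra E_n = span of monomials e[-i_1]···e[-i_n] (degree n in the generators e[-i], i ≥ 0) and the space F_n of symmetric polynomials in n variables, defined by ⟨e(z_1)···e(z_n), f⟩ = f(z_1,...,z_n) where e(z) = Σ_{i≥0} e[-i] z^i, is a well-defined non-degenerate bilinear pairing. -/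
/-!
A degree-`n` monomial `e[-i₁]⋯e[-iₙ]` is determined by the multiplicities of the exponent
vector `(i₁, …, iₙ)`, and a polynomial is symmetric exactly when its coefficient at an exponent
vector depends only on those multiplicities. So pairing the monomial with the coefficient of `f`
at any exponent vector with these multiplicities gives the required value on symmetric `f`.
The monomial symmetric polynomials are then the dual basis: pairing a homogeneous `P` of degree
`n` with the one of multiplicity type `m` returns the coefficient of the monomial `m` in `P`.
Both nondegeneracy statements follow by testing against a nonzero coefficient.
-/

open MvPolynomial

section Multiplicities

variable {ι κ α : Type*} [Fintype ι] [Fintype κ]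

noncomputable def multiplicities (t : ι → α) : α →₀ ℕ := ∑ j, Finsupp.single (t j) 1

theorem multiplicities_apply (t : ι → α) (a : α) :
    multiplicities t a = Nat.card {j // t j = a} := by
  classical
  rw [Nat.card_eq_fintype_card, Fintype.card_subtype, multiplicities, Finsupp.finsetSum_apply,
    Finset.card_filter]
  simp only [Finsupp.single_apply]

theorem multiplicities_comp_equiv (t : ι → α) (e : κ ≃ ι) :
    multiplicities (t ∘ e) = multiplicities t :=
  e.sum_comp fun j => Finsupp.single (t j) 1

theorem multiplicities_eq_iff {t : ι → α} {t' : κ → α} :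
    multiplicities t = multiplicities t' ↔ ∃ e : κ ≃ ι, t ∘ e = t' := by
  refine ⟨fun h => ?_, fun ⟨e, he⟩ => he ▸ (multiplicities_comp_equiv t e).symm⟩
  have hfiber (a : α) : {j // t' j = a} ≃ {i // t i = a} :=
    (Finite.card_eq.mp <| by rw [← multiplicities_apply, ← multiplicities_apply, h]).some
  exact ⟨Equiv.ofFiberEquiv hfiber, funext (Equiv.ofFiberEquiv_map hfiber)⟩

theorem toMultiset_multiplicities (t : ι → α) :
    Finsupp.toMultiset (multiplicities t) = Finset.univ.val.map t := by
  rw [multiplicities, map_sum, Finset.sum_eq_multiset_sum]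
  simp only [Finsupp.toMultiset_single, one_nsmul]
  exact (Multiset.map_map (fun a : α => ({a} : Multiset α)) t _).symm ▸
    Multiset.sum_map_singleton _

theorem Multiset.exists_map_univ_eq {s : Multiset α} (h : Multiset.card s = Fintype.card ι) :
    ∃ t : ι → α, Finset.univ.val.map t = s := by
  have hlen : Fintype.card ι = s.toList.length := by rw [Multiset.length_toList, h]
  let e : ι ≃ Fin s.toList.length := (Fintype.equivFin ι).trans (finCongr hlen)
  refine ⟨s.toList.get ∘ e, ?_⟩
  rw [← Multiset.map_map, Multiset.map_univ_val_equiv, Fin.univ_val_map, List.ofFn_get,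
    Multiset.coe_toList]

theorem exists_multiplicities_eq {m : α →₀ ℕ} (hm : m.degree = Fintype.card ι) :
    ∃ t : ι → α, multiplicities t = m := by
  classical
  obtain ⟨t, ht⟩ := Multiset.exists_map_univ_eq (ι := ι) (s := Finsupp.toMultiset m) <| by
    rw [Finsupp.card_toMultiset, ← hm]
    rfl
  refine ⟨t, ?_⟩
  rw [← Finsupp.toMultiset_toFinsupp (multiplicities t), toMultiset_multiplicities, ht,
    Finsupp.toMultiset_toFinsupp]

end Multiplicities

namespace MvPolynomial

variable {ι R : Type*} [CommSemiring R]

theorem coeff_rename_equivMapDomain (e : Equiv.Perm ι) (f : MvPolynomial ι R) (d : ι →₀ ℕ) :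
    coeff (d.equivMapDomain e) (rename e f) = coeff d f := by
  rw [Finsupp.equivMapDomain_eq_mapDomain]
  exact coeff_rename_mapDomain e e.injective f d

variable [Fintype ι]

theorem multiplicities_equivMapDomain (d : ι →₀ ℕ) (e : Equiv.Perm ι) :
    multiplicities (d.equivMapDomain e) = multiplicities d := by
  rw [← multiplicities_comp_equiv d e.symm]
  rfl

theorem multiplicities_eq_iff_exists_equivMapDomain {d d' : ι →₀ ℕ} :
    multiplicities d = multiplicities d' ↔ ∃ e : Equiv.Perm ι, d.equivMapDomain e = d' := by
  refine ⟨fun h => ?_, fun ⟨e, he⟩ => he ▸ (multiplicities_equivMapDomain d e).symm⟩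
  obtain ⟨e, he⟩ := multiplicities_eq_iff.mp h
  exact ⟨e.symm, DFunLike.coe_injective he⟩

theorem isSymmetric_iff_coeff_eq_of_multiplicities_eq {f : MvPolynomial ι R} :
    f.IsSymmetric ↔
      ∀ d d' : ι →₀ ℕ, multiplicities d = multiplicities d' → coeff d f = coeff d' f := by
  refine ⟨fun hf d d' h => ?_, fun h e => ?_⟩
  · obtain ⟨e, rfl⟩ := multiplicities_eq_iff_exists_equivMapDomain.mp h
    rw [← coeff_rename_equivMapDomain e f d, hf e]
  · ext d
    obtain ⟨d₀, rfl⟩ : ∃ d₀ : ι →₀ ℕ, d₀.equivMapDomain e = d :=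
      ⟨d.equivMapDomain e.symm, by simp [← Finsupp.equivMapDomain_trans]⟩
    rw [coeff_rename_equivMapDomain]
    exact h _ _ (multiplicities_equivMapDomain d₀ e).symm

variable (R) in
noncomputable def monomialSymmetric [DecidableEq ι] (d : ι →₀ ℕ) : MvPolynomial ι R :=
  ∑ d' ∈ Finset.univ.image fun e : Equiv.Perm ι => d.equivMapDomain e, monomial d' 1

theorem coeff_monomialSymmetric [DecidableEq ι] (d d' : ι →₀ ℕ) :
    coeff d' (monomialSymmetric R d) = if multiplicities d = multiplicities d' then 1 else 0 := by
  simp only [monomialSymmetric, coeff_sum, coeff_monomial, Finset.sum_ite_eq', Finset.mem_image,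
    Finset.mem_univ, true_and, multiplicities_eq_iff_exists_equivMapDomain]

theorem isSymmetric_monomialSymmetric [DecidableEq ι] (d : ι →₀ ℕ) :
    (monomialSymmetric R d).IsSymmetric :=
  isSymmetric_iff_coeff_eq_of_multiplicities_eq.mpr fun d₁ d₂ h => by
    rw [coeff_monomialSymmetric, coeff_monomialSymmetric, h]

variable (ι) in
/-- An exponent vector with multiplicities `m`; an arbitrary junk vector when
`m.degree ≠ Fintype.card ι`, where there is none. -/
noncomputable def exponentOf (m : ℕ →₀ ℕ) : ι →₀ ℕ :=
  Function.invFun (fun d : ι →₀ ℕ => multiplicities d) m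

theorem multiplicities_exponentOf_multiplicities (d : ι →₀ ℕ) :
    multiplicities (exponentOf ι (multiplicities d)) = multiplicities d :=
  Function.invFun_eq (f := fun d : ι →₀ ℕ => multiplicities d) ⟨d, rfl⟩

theorem multiplicities_exponentOf {m : ℕ →₀ ℕ} (hm : m.degree = Fintype.card ι) :
    multiplicities (exponentOf ι m) = m := by
  obtain ⟨t, rfl⟩ := exists_multiplicities_eq hm
  exact multiplicities_exponentOf_multiplicities (Finsupp.equivFunOnFinite.symm t)

variable (ι R) in
noncomputable def symmetricPairing : MvPolynomial ℕ R →ₗ[R] MvPolynomial ι R →ₗ[R] R :=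
  (basisMonomials ℕ R).constr R fun m => lcoeff R (exponentOf ι m)

theorem symmetricPairing_monomial (m : ℕ →₀ ℕ) (c : R) (f : MvPolynomial ι R) :
    symmetricPairing ι R (monomial m c) f = c * coeff (exponentOf ι m) f := by
  have hbasis : symmetricPairing ι R (monomial m 1) = lcoeff R (exponentOf ι m) := by
    rw [← congrFun (coe_basisMonomials ℕ R) m]
    exact (basisMonomials ℕ R).constr_basis R _ m
  rw [← mul_one c, ← smul_eq_mul, ← smul_monomial, map_smul, hbasis, LinearMap.smul_apply,
    lcoeff_apply, smul_eq_mul, smul_eq_mul, mul_one]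

theorem symmetricPairing_apply (P : MvPolynomial ℕ R) (f : MvPolynomial ι R) :
    symmetricPairing ι R P f = ∑ m ∈ P.support, coeff m P * coeff (exponentOf ι m) f := by
  conv_lhs => rw [P.as_sum]
  simp only [map_sum, LinearMap.sum_apply, symmetricPairing_monomial]

theorem symmetricPairing_prod_X {f : MvPolynomial ι R} (hf : f.IsSymmetric) (d : ι →₀ ℕ) :
    symmetricPairing ι R (∏ j, X (d j)) f = coeff d f := by
  have hprod : ∏ j, (X (d j) : MvPolynomial ℕ R) = monomial (multiplicities d) 1 := by
    rw [multiplicities, monomial_sum_one]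
    rfl
  rw [hprod, symmetricPairing_monomial, one_mul]
  exact isSymmetric_iff_coeff_eq_of_multiplicities_eq.mp hf _ _
    (multiplicities_exponentOf_multiplicities d)

theorem symmetricPairing_monomialSymmetric [DecidableEq ι] {P : MvPolynomial ℕ R}
    (hP : P.IsHomogeneous (Fintype.card ι)) {m : ℕ →₀ ℕ} (hm : m.degree = Fintype.card ι) :
    symmetricPairing ι R P (monomialSymmetric R (exponentOf ι m)) = coeff m P := by
  calc symmetricPairing ι R P (monomialSymmetric R (exponentOf ι m))
      = ∑ m' ∈ P.support, if m = m' then coeff m' P else 0 := by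
        refine (symmetricPairing_apply P _).trans (Finset.sum_congr rfl fun m' hm' => ?_)
        rw [coeff_monomialSymmetric, multiplicities_exponentOf hm,
          multiplicities_exponentOf (hP.degree_eq_sum_deg_support hm').symm, mul_ite, mul_one,
          mul_zero]
    _ = coeff m P := by
        rw [Finset.sum_ite_eq, ite_eq_left_iff]
        exact fun h => (notMem_support_iff.mp h).symm

theorem exists_isSymmetric_symmetricPairing_ne_zero {P : MvPolynomial ℕ R}
    (hP : P.IsHomogeneous (Fintype.card ι)) (hP₀ : P ≠ 0) :
    ∃ f : MvPolynomial ι R, f.IsSymmetric ∧ symmetricPairing ι R P f ≠ 0 := by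
  classical
  obtain ⟨m, hm⟩ := support_nonempty.mpr hP₀
  refine ⟨monomialSymmetric R (exponentOf ι m), isSymmetric_monomialSymmetric _, ?_⟩
  rw [symmetricPairing_monomialSymmetric hP (hP.degree_eq_sum_deg_support hm).symm]
  exact mem_support_iff.mp hm

theorem exists_isHomogeneous_symmetricPairing_ne_zero {f : MvPolynomial ι R}
    (hf : f.IsSymmetric) (hf₀ : f ≠ 0) :
    ∃ P : MvPolynomial ℕ R, P.IsHomogeneous (Fintype.card ι) ∧ symmetricPairing ι R P f ≠ 0 := by
  obtain ⟨d, hd⟩ := support_nonempty.mpr hf₀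
  refine ⟨∏ j, X (d j), ?_, ?_⟩
  · have h := IsHomogeneous.prod Finset.univ (fun j => (X (d j) : MvPolynomial ℕ R)) (fun _ => 1)
      fun j _ => isHomogeneous_X R (d j)
    rwa [Finset.sum_const, smul_eq_mul, mul_one, Finset.card_univ] at h
  · rw [symmetricPairing_prod_X hf]
    exact mem_support_iff.mp hd

end MvPolynomial

/-- There is a well-defined non-degenerate bilinear pairing between the
degree-`n` component `E_n` of the polynomial algebra `E = ℂ[e[0], e[-1], e[-2], …]`
(realized as `MvPolynomial ℕ ℂ`, with `e[-i] = X i`, `E_n` being the span of products of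
`n` generators, i.e. the homogeneous polynomials of degree `n`) and the space
`F_n = ℂ[x_1,…,x_n]^{S_n}` of symmetric polynomials, determined by
`⟨e(z_1)⋯e(z_n), f⟩ = f(z_1,…,z_n)` where `e(z) = Σ_{i ≥ 0} e[-i] z^i`; that is,
`⟨e[-i_1]⋯e[-i_n], f⟩` is the coefficient of `z_1^{i_1}⋯z_n^{i_n}` in `f`. -/
theorem pairing_exists_nondegenerate (n : ℕ) :
    ∃ B : MvPolynomial ℕ ℂ →ₗ[ℂ] (MvPolynomial (Fin n) ℂ →ₗ[ℂ] ℂ),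
      (∀ (t : Fin n → ℕ) (f : MvPolynomial (Fin n) ℂ), f.IsSymmetric →
        B (∏ j : Fin n, X (t j)) f = coeff (∑ j : Fin n, Finsupp.single j (t j)) f) ∧
      (∀ P : MvPolynomial ℕ ℂ, P.IsHomogeneous n → P ≠ 0 →
        ∃ f : MvPolynomial (Fin n) ℂ, f.IsSymmetric ∧ B P f ≠ 0) ∧
      (∀ f : MvPolynomial (Fin n) ℂ, f.IsSymmetric → f ≠ 0 →
        ∃ P : MvPolynomial ℕ ℂ, P.IsHomogeneous n ∧ B P f ≠ 0) := by
  refine ⟨symmetricPairing (Fin n) ℂ, fun t f hf => ?_, fun P hP hP₀ => ?_, fun f hf hf₀ => ?_⟩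
  · rw [← Finsupp.equivFunOnFinite_symm_eq_sum, ← symmetricPairing_prod_X hf]
    simp
  · exact exists_isSymmetric_symmetricPairing_ne_zero (by rwa [Fintype.card_fin]) hP₀
  · simpa only [Fintype.card_fin] using exists_isHomogeneous_symmetricPairing_ne_zero hf hf₀
end

section
/- Let J_n^{(k,2)} ⊂ E_n be the degree-n component of the ideal of ℂ[e[0],e[-1],...] generated by all coefficients of e(z)^{k+1} together with e[0]^{b_0+1}. Then under the pairing ⟨e(z_1)···e(z_n), f⟩ = f(z_1,...,z_n), the orthogonal complement of J_n^{(k,2)} in F_n = ℂ[x_1,...,x_n]^{S_n} is exactly the space of symmetric polynomials f such that f = 0 whenever x_1 = ··· = x_{k+1}, and f = 0 whenever x_1 = ··· = x_{b_0+1} = 0. -/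
open MvPolynomial

/-- The coefficient of `z^N` in `e(z)^(k+1)`, where `e(z) = Σ_{i≥0} e[-i] z^i` and
`e[-i] = X i` in `ℂ[e[0], e[-1], …] = MvPolynomial ℕ ℂ`. -/
noncomputable def coefPow (k N : ℕ) : MvPolynomial ℕ ℂ :=
  ∑ t ∈ Finset.Nat.antidiagonalTuple (k + 1) N, ∏ j : Fin (k + 1), X (t j)

/-!
The ideal `J` is spanned over `ℂ` by the products `g · e[-w₁] ⋯ e[-w_m]` with `g` a generator,
so `f ⊥ J_n` iff `f` pairs to zero with each such product of degree `n`. By the pairing,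
`e[0]^(b₀+1) · e[-w₁] ⋯ e[-w_m]` pairs with `f` to the coefficient of
`x_{b₀+2}^{w₁} ⋯ x_n^{w_m}` in `f`, and these are exactly the coefficients of
`f(0, …, 0, x_{b₀+2}, …, x_n)`. Likewise the `z^N`-coefficient of `e(z)^(k+1)` times
`e[-w₁] ⋯ e[-w_m]` pairs with `f` to `∑_{t₁+⋯+t_{k+1}=N}` of the coefficients of
`x₁^{t₁} ⋯ x_{k+1}^{t_{k+1}} x_{k+2}^{w₁} ⋯ x_n^{w_m}` in `f`, which is the coefficient of
`y^N x_{k+2}^{w₁} ⋯ x_n^{w_m}` in `f(y, …, y, x_{k+2}, …, x_n)`.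
-/

namespace Finsupp

variable {c m : ℕ}

theorem equivFunOnFinite_symm_append_inj {t t' : Fin c → ℕ} {w w' : Fin m → ℕ} :
    equivFunOnFinite.symm (Fin.append t w) =
        equivFunOnFinite.symm (Fin.append t' w') ↔ t = t' ∧ w = w' := by
  rw [Equiv.apply_eq_iff_eq]
  refine ⟨fun h => ⟨?_, ?_⟩, fun ⟨ht, hw⟩ => ht ▸ hw ▸ rfl⟩
  · ext j
    simpa using congrFun h (Fin.castAdd m j)
  · ext j
    simpa using congrFun h (Fin.natAdd c j)

theorem exists_eq_equivFunOnFinite_symm_append (e : Fin (c + m) →₀ ℕ) :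
    ∃ t w, e = equivFunOnFinite.symm (Fin.append t w) :=
  ⟨_, _, by rw [Fin.append_castAdd_natAdd, equivFunOnFinite_symm_coe]⟩

end Finsupp

namespace MvPolynomial

variable {R : Type*} [CommSemiring R]

section

variable {σ : Type*}

theorem isHomogeneous_prod_X {m : ℕ} (w : Fin m → σ) :
    (∏ j, X (w j) : MvPolynomial σ R).IsHomogeneous m := by
  simpa using IsHomogeneous.prod Finset.univ (fun j => (X (w j) : MvPolynomial σ R)) (fun _ => 1)
    fun j _ => isHomogeneous_X R (w j)

theorem map_homogeneousComponent_mul_eq_zero {M : Type*} [AddCommMonoid M] [Module R M]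
    (φ : MvPolynomial σ R →ₗ[R] M) (n : ℕ) {g : MvPolynomial σ R}
    (h : ∀ m (w : Fin m → σ), φ (homogeneousComponent n (g * ∏ j, X (w j))) = 0)
    (r : MvPolynomial σ R) : φ (homogeneousComponent n (g * r)) = 0 := by
  -- Induct on `r`, absorbing each variable `X i` into the product `∏ j, X (w j)`.
  suffices ∀ m (w : Fin m → σ), φ (homogeneousComponent n (g * (∏ j, X (w j)) * r)) = 0 by
    simpa using this 0 Fin.elim0
  induction r using MvPolynomial.induction_on with
  | C b =>
    intro m w
    rw [mul_comm, ← smul_eq_C_mul, map_smul, map_smul, h, smul_zero]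
  | add p q hp hq =>
    intro m w
    rw [mul_add, map_add, map_add, hp, hq, add_zero]
  | mul_X p i hp =>
    intro m w
    have := hp (m + 1) (Fin.snoc w i)
    simp only [Fin.prod_univ_castSucc, Fin.snoc_last, Fin.snoc_castSucc] at this
    convert this using 3
    ring

theorem forall_isHomogeneous_mem_span_iff {M ι : Type*} [AddCommMonoid M] [Module R M]
    (φ : MvPolynomial σ R →ₗ[R] M) (g : ι → MvPolynomial σ R) (deg : ι → ℕ)
    (hg : ∀ a, (g a).IsHomogeneous (deg a)) (n : ℕ) :
    (∀ P ∈ Ideal.span (Set.range g), P.IsHomogeneous n → φ P = 0) ↔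
      ∀ a m (w : Fin m → σ), deg a + m = n → φ (g a * ∏ j, X (w j)) = 0 := by
  refine ⟨fun h a m w hn => h _ (Ideal.mul_mem_right _ _ (Ideal.subset_span ⟨a, rfl⟩))
    (hn ▸ (hg a).mul (isHomogeneous_prod_X w)), fun h P hP hPn => ?_⟩
  have hgen : ∀ a r, φ (homogeneousComponent n (g a * r)) = 0 := by
    refine fun a => map_homogeneousComponent_mul_eq_zero φ n fun m w => ?_
    rw [homogeneousComponent_of_mem ((hg a).mul (isHomogeneous_prod_X w))]
    split_ifs with hn
    · exact h a m w hn.symm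
    · exact map_zero φ
  have hP' : ∀ r, φ (homogeneousComponent n (r * P)) = 0 := by
    clear hPn
    induction hP using Submodule.span_induction with
    | mem x hx =>
      obtain ⟨a, rfl⟩ := hx
      simpa only [mul_comm] using hgen a
    | zero => simp
    | add x y _ _ hx hy => intro r; rw [mul_add, map_add, map_add, hx, hy, add_zero]
    | smul s x _ hx => intro r; rw [smul_eq_mul, ← mul_assoc]; exact hx (r * s)
  simpa [homogeneousComponent_of_mem hPn] using hP' 1

open scoped Classical in
theorem aeval_ite_zero_monomial (p : σ → Prop) [DecidablePred p] (e : σ →₀ ℕ) (a : R) :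
    aeval (fun i => if p i then 0 else X i) (monomial e a) =
      if ∀ i, p i → e i = 0 then monomial e a else 0 := by
  rw [aeval_monomial, algebraMap_eq]
  split_ifs with he
  · rw [monomial_eq]
    congr 1
    refine Finsupp.prod_congr fun i hi => ?_
    rw [if_neg fun hpi => Finsupp.mem_support_iff.1 hi (he i hpi)]
  · obtain ⟨i, hpi, hei⟩ : ∃ i, p i ∧ e i ≠ 0 := by simpa using he
    rw [Finsupp.prod, Finset.prod_eq_zero (Finsupp.mem_support_iff.2 hei) (by simp [hpi, hei]),
      mul_zero]

open scoped Classical in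
theorem coeff_aeval_ite_zero (p : σ → Prop) [DecidablePred p] (e : σ →₀ ℕ)
    (f : MvPolynomial σ R) :
    coeff e (aeval (fun i => if p i then 0 else X i) f) =
      if ∀ i, p i → e i = 0 then coeff e f else 0 := by
  induction f using MvPolynomial.induction_on' with
  | monomial e' a =>
    rw [aeval_ite_zero_monomial]
    by_cases he : e' = e
    · subst he; split_ifs <;> simp
    · split_ifs <;> simp [coeff_monomial, he]
  | add f g hf hg => rw [map_add, coeff_add, coeff_add, hf, hg]; split_ifs <;> simp

theorem aeval_ite_zero_eq_zero_iff (p : σ → Prop) [DecidablePred p] (f : MvPolynomial σ R) :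
    aeval (fun i => if p i then 0 else (X i : MvPolynomial σ R)) f = 0 ↔
      ∀ e : σ →₀ ℕ, (∀ i, p i → e i = 0) → coeff e f = 0 := by
  classical
  rw [MvPolynomial.ext_iff]
  simp only [coeff_aeval_ite_zero, coeff_zero, ite_eq_right_iff]

end

section Collapse

variable {c m : ℕ}

def collapse (c : ℕ) {n : ℕ} (i : Fin n) : Unit ⊕ Fin n :=
  if (i : ℕ) < c then Sum.inl () else Sum.inr i

theorem aeval_ite_X_eq_rename_collapse {n : ℕ} (c : ℕ) (f : MvPolynomial (Fin n) R) :
    aeval (fun i : Fin n => if (i : ℕ) < c then (X (Sum.inl ()) : MvPolynomial (Unit ⊕ Fin n) R)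
      else X (Sum.inr i)) f = rename (collapse c) f := by
  rw [rename_eq_aeval]
  congr 2
  funext i
  simp only [Function.comp, collapse]
  split_ifs <;> rfl

noncomputable def collapsedExponent (c : ℕ) {m : ℕ} (N : ℕ) (w : Fin m → ℕ) :
    Unit ⊕ Fin (c + m) →₀ ℕ :=
  Finsupp.single (Sum.inl ()) N + ∑ j, Finsupp.single (Sum.inr (Fin.natAdd c j)) (w j)

theorem mapDomain_collapse_append (t : Fin c → ℕ) (w : Fin m → ℕ) :
    (Finsupp.equivFunOnFinite.symm (Fin.append t w)).mapDomain (collapse c) =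
      collapsedExponent c (∑ j, t j) w := by
  rw [Finsupp.equivFunOnFinite_symm_eq_sum, Finsupp.mapDomain_finsetSum, Fin.sum_univ_add]
  simp [collapse, Finsupp.mapDomain_single, collapsedExponent, Finsupp.single_finsetSum]

theorem collapsedExponent_inj {N N' : ℕ} {w w' : Fin m → ℕ} :
    collapsedExponent c N w = collapsedExponent c N' w' ↔ N = N' ∧ w = w' := by
  refine ⟨fun h => ⟨?_, ?_⟩, fun ⟨hN, hw⟩ => hN ▸ hw ▸ rfl⟩
  · simpa [collapsedExponent, Finsupp.finsetSum_apply] using DFunLike.congr_fun h (Sum.inl ())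
  · ext j
    simpa [collapsedExponent, Finsupp.finsetSum_apply, Finsupp.single_apply]
      using DFunLike.congr_fun h (Sum.inr (Fin.natAdd c j))

theorem coeff_collapsedExponent_rename (f : MvPolynomial (Fin (c + m)) R) (N : ℕ)
    (w : Fin m → ℕ) :
    coeff (collapsedExponent c N w) (rename (collapse c) f) =
      ∑ t ∈ Finset.Nat.antidiagonalTuple c N,
        coeff (Finsupp.equivFunOnFinite.symm (Fin.append t w)) f := by
  classical
  induction f using MvPolynomial.induction_on' with
  | monomial e a =>
    obtain ⟨t₀, w₀, rfl⟩ := Finsupp.exists_eq_equivFunOnFinite_symm_append e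
    simp only [rename_monomial, mapDomain_collapse_append, coeff_monomial, collapsedExponent_inj,
      Finsupp.equivFunOnFinite_symm_append_inj]
    by_cases hw : w₀ = w
    · simp [hw, Finset.sum_ite_eq, Finset.Nat.mem_antidiagonalTuple]
    · simp [hw]
  | add f g hf hg =>
    rw [map_add, coeff_add, hf, hg, ← Finset.sum_add_distrib]
    simp only [coeff_add]

theorem rename_collapse_eq_zero_iff (f : MvPolynomial (Fin (c + m)) R) :
    rename (collapse c) f = 0 ↔ ∀ N (w : Fin m → ℕ),
      ∑ t ∈ Finset.Nat.antidiagonalTuple c N,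
        coeff (Finsupp.equivFunOnFinite.symm (Fin.append t w)) f = 0 := by
  refine ⟨fun h N w => by rw [← coeff_collapsedExponent_rename, h, coeff_zero], fun h => ?_⟩
  ext κ
  rw [coeff_zero]
  by_cases hκ : ∃ u : Fin (c + m) →₀ ℕ, u.mapDomain (collapse c) = κ
  · obtain ⟨u, rfl⟩ := hκ
    obtain ⟨t, w, rfl⟩ := Finsupp.exists_eq_equivFunOnFinite_symm_append u
    rw [mapDomain_collapse_append, coeff_collapsedExponent_rename, h]
  · exact coeff_rename_eq_zero _ _ _ fun u hu => absurd ⟨u, hu⟩ hκ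

end Collapse

theorem isHomogeneous_coefPow (k N : ℕ) : (coefPow k N).IsHomogeneous (k + 1) := by
  rw [coefPow]
  exact IsHomogeneous.sum _ _ _ fun t _ => isHomogeneous_prod_X t

def IsMonomialPairing {n : ℕ} (B : MvPolynomial ℕ R →ₗ[R] MvPolynomial (Fin n) R →ₗ[R] R) :
    Prop :=
  ∀ (t : Fin n → ℕ) (g : MvPolynomial (Fin n) R), g.IsSymmetric →
    B (∏ j : Fin n, X (t j)) g = coeff (∑ j : Fin n, Finsupp.single j (t j)) g

namespace IsMonomialPairing

section Split

variable {c m : ℕ} {B : MvPolynomial ℕ R →ₗ[R] MvPolynomial (Fin (c + m)) R →ₗ[R] R}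
  {f : MvPolynomial (Fin (c + m)) R}

theorem apply_prod_X_mul_prod_X (hB : IsMonomialPairing B) (hf : f.IsSymmetric)
    (t : Fin c → ℕ) (w : Fin m → ℕ) :
    B ((∏ j, X (t j)) * ∏ j, X (w j)) f =
      coeff (Finsupp.equivFunOnFinite.symm (Fin.append t w)) f := by
  have hprod :
      (∏ j, X (t j) : MvPolynomial ℕ R) * ∏ j, X (w j) = ∏ i, X (Fin.append t w i) := by
    simp [Fin.prod_univ_add]
  rw [hprod, hB _ _ hf, Finsupp.equivFunOnFinite_symm_eq_sum]

theorem apply_X_zero_pow_mul (hB : IsMonomialPairing B) (hf : f.IsSymmetric) (w : Fin m → ℕ) :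
    B (X 0 ^ c * ∏ j, X (w j)) f =
      coeff (Finsupp.equivFunOnFinite.symm (Fin.append 0 w)) f := by
  rw [← hB.apply_prod_X_mul_prod_X hf 0 w]
  simp

end Split

theorem apply_coefPow_mul {k m : ℕ}
    {B : MvPolynomial ℕ ℂ →ₗ[ℂ] MvPolynomial (Fin (k + 1 + m)) ℂ →ₗ[ℂ] ℂ}
    (hB : IsMonomialPairing B) {f : MvPolynomial (Fin (k + 1 + m)) ℂ} (hf : f.IsSymmetric)
    (N : ℕ) (w : Fin m → ℕ) :
    B (coefPow k N * ∏ j, X (w j)) f = ∑ t ∈ Finset.Nat.antidiagonalTuple (k + 1) N,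
      coeff (Finsupp.equivFunOnFinite.symm (Fin.append t w)) f := by
  simp only [coefPow, Finset.sum_mul, map_sum, LinearMap.sum_apply,
    hB.apply_prod_X_mul_prod_X hf]

variable {n : ℕ}

theorem coefPow_mul_eq_zero_iff {k : ℕ}
    {B : MvPolynomial ℕ ℂ →ₗ[ℂ] MvPolynomial (Fin n) ℂ →ₗ[ℂ] ℂ} (hB : IsMonomialPairing B)
    {f : MvPolynomial (Fin n) ℂ} (hf : f.IsSymmetric) :
    (∀ N m (w : Fin m → ℕ), k + 1 + m = n → B (coefPow k N * ∏ j, X (w j)) f = 0) ↔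
      (k + 1 ≤ n → aeval (fun i : Fin n => if (i : ℕ) < k + 1 then
        (X (Sum.inl ()) : MvPolynomial (Unit ⊕ Fin n) ℂ) else X (Sum.inr i)) f = 0) := by
  refine ⟨fun h hkn => ?_, fun h N m w hn => ?_⟩
  · obtain ⟨m, rfl⟩ := Nat.exists_eq_add_of_le hkn
    rw [aeval_ite_X_eq_rename_collapse, rename_collapse_eq_zero_iff]
    intro N w
    rw [← hB.apply_coefPow_mul hf]
    exact h N m w rfl
  · subst hn
    rw [aeval_ite_X_eq_rename_collapse, rename_collapse_eq_zero_iff] at h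
    rw [hB.apply_coefPow_mul hf]
    exact h (Nat.le_add_right _ _) N w

theorem X_zero_pow_mul_eq_zero_iff (c : ℕ)
    {B : MvPolynomial ℕ R →ₗ[R] MvPolynomial (Fin n) R →ₗ[R] R} (hB : IsMonomialPairing B)
    {f : MvPolynomial (Fin n) R} (hf : f.IsSymmetric) :
    (∀ m (w : Fin m → ℕ), c + m = n → B (X 0 ^ c * ∏ j, X (w j)) f = 0) ↔
      (c ≤ n → aeval (fun i : Fin n => if (i : ℕ) < c then (0 : MvPolynomial (Fin n) R)
        else X i) f = 0) := by
  refine ⟨fun h hcn => ?_, fun h m w hn => ?_⟩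
  · obtain ⟨m, rfl⟩ := Nat.exists_eq_add_of_le hcn
    rw [aeval_ite_zero_eq_zero_iff]
    intro e he
    obtain ⟨t, w, rfl⟩ := Finsupp.exists_eq_equivFunOnFinite_symm_append e
    obtain rfl : t = 0 := by
      ext j
      simpa using he (Fin.castAdd m j) (by simp)
    rw [← hB.apply_X_zero_pow_mul hf]
    exact h m w rfl
  · subst hn
    rw [aeval_ite_zero_eq_zero_iff] at h
    rw [hB.apply_X_zero_pow_mul hf]
    refine h (Nat.le_add_right _ _) _ fun i hi => ?_
    induction i using Fin.addCases with
    | left j => simp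
    | right j => simp at hi

end IsMonomialPairing

end MvPolynomial

theorem orthogonal_complement_k2_general (k b0 n : ℕ)
    (B : MvPolynomial ℕ ℂ →ₗ[ℂ] (MvPolynomial (Fin n) ℂ →ₗ[ℂ] ℂ))
    (hB : ∀ (t : Fin n → ℕ) (g : MvPolynomial (Fin n) ℂ), g.IsSymmetric →
      B (∏ j : Fin n, X (t j)) g = coeff (∑ j : Fin n, Finsupp.single j (t j)) g)
    (f : MvPolynomial (Fin n) ℂ) (hsym : f.IsSymmetric) :
    (∀ P ∈ Ideal.span
        ({X 0 ^ (b0 + 1)} ∪ {P : MvPolynomial ℕ ℂ | ∃ N, P = coefPow k N}),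
      P.IsHomogeneous n → B P f = 0) ↔
    ((k + 1 ≤ n →
        aeval (fun i : Fin n => if (i : ℕ) < k + 1 then
          (X (Sum.inl ()) : MvPolynomial (Unit ⊕ Fin n) ℂ) else X (Sum.inr i)) f = 0) ∧
     (b0 + 1 ≤ n →
        aeval (fun i : Fin n => if (i : ℕ) < b0 + 1 then (0 : MvPolynomial (Fin n) ℂ)
          else X i) f = 0)) := by
  have hgen : ({X 0 ^ (b0 + 1)} ∪ {P | ∃ N, P = coefPow k N} : Set (MvPolynomial ℕ ℂ)) =
      Set.range fun o : Option ℕ => o.elim (X 0 ^ (b0 + 1)) (coefPow k) := by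
    ext P
    simp [Option.exists, eq_comm]
  have hdeg : ∀ o : Option ℕ,
      (o.elim (X 0 ^ (b0 + 1)) (coefPow k)).IsHomogeneous (o.elim (b0 + 1) fun _ => k + 1) := by
    rintro (_ | N)
    exacts [isHomogeneous_X_pow 0 _, isHomogeneous_coefPow k N]
  have hspan := forall_isHomogeneous_mem_span_iff (B.flip f) _ _ hdeg n
  simp only [LinearMap.flip_apply, Option.forall, Option.elim_none, Option.elim_some] at hspan
  rw [hgen, hspan, and_comm]
  exact and_congr (IsMonomialPairing.coefPow_mul_eq_zero_iff hB hsym)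
    (IsMonomialPairing.X_zero_pow_mul_eq_zero_iff (b0 + 1) hB hsym)

/-- Let `J^{(k,2)}` be the ideal of `ℂ[e[0], e[-1], …]` generated by all
coefficients of `e(z)^{k+1}` together with `e[0]^{b₀+1}`, and let `B` be the pairing with
`⟨e(z_1)⋯e(z_n), f⟩ = f(z_1,…,z_n)`.  A symmetric polynomial `f` in `n` variables is
orthogonal to the degree-`n` component `J_n^{(k,2)}` iff `f = 0` whenever
`x_1 = ⋯ = x_{k+1}` and `f = 0` whenever `x_1 = ⋯ = x_{b₀+1} = 0`. -/
theorem orthogonal_complement_k2 (k b0 n : ℕ) (hb0 : b0 ≤ k)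
    (B : MvPolynomial ℕ ℂ →ₗ[ℂ] (MvPolynomial (Fin n) ℂ →ₗ[ℂ] ℂ))
    (hB : ∀ (t : Fin n → ℕ) (g : MvPolynomial (Fin n) ℂ), g.IsSymmetric →
      B (∏ j : Fin n, X (t j)) g = coeff (∑ j : Fin n, Finsupp.single j (t j)) g)
    (f : MvPolynomial (Fin n) ℂ) (hsym : f.IsSymmetric) :
    (∀ P ∈ Ideal.span
        ({X 0 ^ (b0 + 1)} ∪ {P : MvPolynomial ℕ ℂ | ∃ N, P = coefPow k N}),
      P.IsHomogeneous n → B P f = 0) ↔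
    ((k + 1 ≤ n →
        aeval (fun i : Fin n => if (i : ℕ) < k + 1 then
          (X (Sum.inl ()) : MvPolynomial (Unit ⊕ Fin n) ℂ) else X (Sum.inr i)) f = 0) ∧
     (b0 + 1 ≤ n →
        aeval (fun i : Fin n => if (i : ℕ) < b0 + 1 then (0 : MvPolynomial (Fin n) ℂ)
          else X i) f = 0)) :=
  orthogonal_complement_k2_general k b0 n B hB f hsym
end

section
/- A sequence (a_i)_{i≥0} of nonnegative integers with finitely many nonzero entries is (k,2)-admissible iff a_i + a_{i+1} ≤ k for all i ≥ 0. The generating function Σ_{a ∈ C_{b_0}^{(k,2)}} q^{Σ j a_j} z^{Σ a_j}, summed over (k,2)-admissible sequences with a_0 ≤ b_0, equals Σ_{n≥0} z^n Σ_{m_1+2m_2+···+km_k = n, m_a ≥ 0} q^{(1/2)(mᵀAm − diag(A)·m) + c·m} / ((q)_{m_1}···(q)_{m_k}), where A_{ab}=2min(a,b), c=(0,...,0,1,2,...,k−b_0), and (q)_m = ∏_{j=1}^m (1−q^j). -/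
open PowerSeries

/-- The exponent `½(mᵀ A m − diag(A)·m) + c·m` for `A_{ab} = 2 min(a,b)`,
`c_a = (a − b₀)₊`, written as a natural number:
`Σ_{a<b} 2 min(a,b) m_a m_b + Σ_a 2a · C(m_a, 2) + Σ_a (a − b₀)₊ m_a`. -/
def fermiExp2 (k b0 : ℕ) (m : Fin k → ℕ) : ℕ :=
  (∑ pq ∈ Finset.univ.filter (fun pq : Fin k × Fin k => pq.1 < pq.2),
      2 * (min (pq.1 : ℕ) (pq.2 : ℕ) + 1) * m pq.1 * m pq.2)
  + (∑ a : Fin k, 2 * ((a : ℕ) + 1) * Nat.choose (m a) 2)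
  + ∑ a : Fin k, (((a : ℕ) + 1) - b0) * m a

/-- The finite set of multiplicity vectors `m` with `Σ_a a·m_a = n`. -/
def restricted (k n : ℕ) : Finset (Fin k → ℕ) :=
  (Fintype.piFinset fun _ : Fin k => Finset.range (n + 1)).filter
    fun m => ∑ a : Fin k, ((a : ℕ) + 1) * m a = n

/-! Write `F c n` for the generating function of the admissible sequences with `a 0 < c` and
`n` particles, weighted by `q ^ ∑ (j + 1) a_j`. Splitting off the value of `a 0` gives
`F (c + 1) n = F c n + q ^ n F (k + 1 - c) (n - c)` (the last term only for `c ≤ n`); together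
with `F 0 n = 0` and `F (k + 1) 0 = 1` these relations determine `F`, because summing them over
`c ≤ k` expresses `(1 - q ^ n) F (k + 1) n` through `F` at fewer particles.

The fermionic sums satisfy the same relations, by induction on `k`: splitting off the
multiplicity `r` of the largest part `k + 1` writes the level-`k + 1` sums through the level-`k`
ones, and the relations at level `k + 1` follow from those at level `k` once the terms carrying
the factor `1 - q ^ r` are reindexed by `r ↦ r - 1`. -/

namespace FermionicFormula

open Finset Finsupp

noncomputable section

section Shift

variable {M : Type*} [AddCommMonoid M]

def natCons (c : M) (a : ℕ →₀ M) : ℕ →₀ M :=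
  single 0 c + mapDomain Nat.succ a

def natTail (a : ℕ →₀ M) : ℕ →₀ M :=
  comapDomain Nat.succ a Nat.succ_injective.injOn

@[simp] lemma natTail_apply (a : ℕ →₀ M) (i : ℕ) : natTail a i = a (i + 1) := rfl

@[simp] lemma natCons_zero (c : M) (a : ℕ →₀ M) : natCons c a 0 = c := by
  simp [natCons, mapDomain_of_notMem_range _ _ (fun ⟨i, h⟩ => Nat.succ_ne_zero i h)]

@[simp] lemma natCons_succ (c : M) (a : ℕ →₀ M) (i : ℕ) : natCons c a (i + 1) = a i := by
  simp [natCons, mapDomain_apply Nat.succ_injective]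

lemma natCons_natTail (a : ℕ →₀ M) : natCons (a 0) (natTail a) = a := by
  ext (_ | i) <;> simp

lemma natTail_natCons (c : M) (a : ℕ →₀ M) : natTail (natCons c a) = a := by
  ext i; simp

lemma sum_natCons {N : Type*} [AddCommMonoid N] (c : M) (a : ℕ →₀ M) {g : ℕ → M → N}
    (h_zero : ∀ i, g i 0 = 0) (h_add : ∀ i x y, g i (x + y) = g i x + g i y) :
    (natCons c a).sum g = g 0 c + a.sum fun i v => g (i + 1) v := by
  rw [natCons, sum_add_index' h_zero h_add, sum_single_index (h_zero 0),
    sum_mapDomain_index h_zero h_add]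

end Shift

section Counting

def admissibleSet (k c n d : ℕ) : Set (ℕ →₀ ℕ) :=
  {a | (∀ i, a i + a (i + 1) ≤ k) ∧ a 0 < c ∧ (a.sum fun _ v => v) = n ∧
    (a.sum fun i v => i * v) = d}

lemma mul_apply_le_sum_mul (a : ℕ →₀ ℕ) (i : ℕ) : i * a i ≤ a.sum fun j v => j * v := by
  by_cases h : i ∈ a.support
  · exact single_le_sum (f := fun j => j * a j) (fun _ _ => Nat.zero_le _) h
  · simp [notMem_support_iff.mp h]

lemma admissibleSet_finite (k c n d : ℕ) : (admissibleSet k c n d).Finite := by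
  refine (finsuppAntidiag (range (d + 1)) n).finite_toSet.subset fun a ⟨_, _, hn, hd⟩ => ?_
  refine mem_finsuppAntidiag'.2 ⟨hn, fun i hi => mem_range.2 ?_⟩
  have := mul_apply_le_sum_mul a i
  have := Nat.le_mul_of_pos_right i (Nat.pos_of_ne_zero (mem_support_iff.1 hi))
  omega

lemma sum_natCons_id (c : ℕ) (a : ℕ →₀ ℕ) :
    ((natCons c a).sum fun _ v => v) = c + a.sum fun _ v => v :=
  sum_natCons c a (fun _ => rfl) fun _ _ _ => rfl

lemma sum_natCons_mul (c : ℕ) (a : ℕ →₀ ℕ) :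
    ((natCons c a).sum fun i v => i * v) = (a.sum fun i v => i * v) + a.sum fun _ v => v := by
  rw [sum_natCons c a (fun _ => mul_zero _) fun _ _ _ => mul_add _ _ _, zero_mul, zero_add,
    ← sum_add]
  simp only [add_mul, one_mul]

lemma natTail_image_admissibleSet {k c n d : ℕ} (hcn : c ≤ n) (hnd : n - c ≤ d) :
    natTail '' {a ∈ admissibleSet k (c + 1) n d | a 0 = c} =
      admissibleSet k (k + 1 - c) (n - c) (d - (n - c)) := by
  ext b
  constructor
  · rintro ⟨a, ⟨⟨hadm, -, hn, hd⟩, h0⟩, rfl⟩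
    rw [← natCons_natTail a, h0] at hn hd
    rw [sum_natCons_id] at hn
    rw [sum_natCons_mul] at hd
    have := hadm 0
    simp only [h0, zero_add] at this
    exact ⟨fun i => hadm (i + 1), by simp only [natTail_apply, zero_add]; omega, by omega,
      by omega⟩
  · rintro ⟨hadm, h0, hn, hd⟩
    refine ⟨natCons c b, ⟨⟨fun i => ?_, by simp, ?_, ?_⟩, by simp⟩, natTail_natCons c b⟩
    · cases i with
      | zero => simp; omega
      | succ i => simpa using hadm i
    · rw [sum_natCons_id, hn]; omega
    · rw [sum_natCons_mul, hn, hd]; omega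

lemma ncard_admissibleSet_head (k c n d : ℕ) :
    ({a ∈ admissibleSet k (c + 1) n d | a 0 = c}).ncard =
      if c ≤ n ∧ n - c ≤ d then (admissibleSet k (k + 1 - c) (n - c) (d - (n - c))).ncard
      else 0 := by
  split_ifs with h
  · rw [← natTail_image_admissibleSet h.1 h.2, Set.InjOn.ncard_image]
    intro a ha b hb hab
    rw [← natCons_natTail a, ← natCons_natTail b, ha.2, hb.2, hab]
  · refine (Set.ncard_eq_zero ((admissibleSet_finite ..).subset fun a ha => ha.1)).2 ?_
    refine Set.eq_empty_of_forall_notMem ?_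
    rintro a ⟨⟨-, -, hn, hd⟩, h0⟩
    rw [← natCons_natTail a, h0, sum_natCons_id] at hn
    rw [← natCons_natTail a, h0, sum_natCons_mul] at hd
    omega

lemma ncard_admissibleSet_succ (k c n d : ℕ) :
    (admissibleSet k (c + 1) n d).ncard =
      (admissibleSet k c n d).ncard + ({a ∈ admissibleSet k (c + 1) n d | a 0 = c}).ncard := by
  have hsplit : admissibleSet k (c + 1) n d =
      admissibleSet k c n d ∪ {a ∈ admissibleSet k (c + 1) n d | a 0 = c} := by
    ext a
    simp only [admissibleSet, Set.mem_union, Set.mem_ofPred_eq]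
    constructor
    · rintro ⟨hadm, h0, hn, hd⟩
      rcases Nat.lt_succ_iff_lt_or_eq.1 h0 with h | h
      · exact Or.inl ⟨hadm, h, hn, hd⟩
      · exact Or.inr ⟨⟨hadm, h0, hn, hd⟩, h⟩
    · rintro (⟨hadm, h0, hn, hd⟩ | ⟨h, -⟩)
      · exact ⟨hadm, by omega, hn, hd⟩
      · exact h
  have hdisj : Disjoint (admissibleSet k c n d) {a ∈ admissibleSet k (c + 1) n d | a 0 = c} := by
    rw [Set.disjoint_left]
    rintro a ⟨-, h, -⟩ ⟨-, h'⟩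
    omega
  rw [← Set.ncard_union_eq hdisj (admissibleSet_finite ..)
    ((admissibleSet_finite ..).subset fun a ha => ha.1), ← hsplit]

end Counting

section PowerSeries

variable {R : Type*} [CommRing R]

lemma constantCoeff_one_sub_X_pow {n : ℕ} (hn : n ≠ 0) :
    constantCoeff (1 - X ^ n : PowerSeries R) = 1 := by
  simp [zero_pow hn]

lemma one_sub_X_pow_ne_zero [Nontrivial R] {n : ℕ} (hn : n ≠ 0) :
    (1 - X ^ n : PowerSeries R) ≠ 0 :=
  fun h => by simpa [h] using constantCoeff_one_sub_X_pow (R := R) hn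

def qPochhammer (m : ℕ) : PowerSeries R :=
  ∏ j ∈ range m, (1 - X ^ (j + 1))

lemma one_sub_X_pow_mul_inv_qPochhammer {𝕜 : Type*} [Field 𝕜] (r : ℕ) :
    (1 - X ^ (r + 1)) * (qPochhammer (r + 1))⁻¹ = (qPochhammer (R := 𝕜) r)⁻¹ := by
  rw [qPochhammer, prod_range_succ, PowerSeries.mul_inv_rev, ← mul_assoc,
    PowerSeries.mul_inv_cancel _ (by simp [constantCoeff_one_sub_X_pow]), one_mul, qPochhammer]

end PowerSeries

variable {𝕜 : Type*} [Field 𝕜]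

section System

structure IsCharacterSystem (k : ℕ) (F : ℕ → ℕ → PowerSeries 𝕜) : Prop where
  zero : ∀ n, F 0 n = 0
  top_zero : F (k + 1) 0 = 1
  succ : ∀ c n, F (c + 1) n = F c n + if c ≤ n then X ^ n * F (k + 1 - c) (n - c) else 0

namespace IsCharacterSystem

variable {k : ℕ} {F G : ℕ → ℕ → PowerSeries 𝕜}

lemma eq_sum (hF : IsCharacterSystem k F) (c n : ℕ) :
    F c n = ∑ j ∈ range c, if j ≤ n then X ^ n * F (k + 1 - j) (n - j) else 0 := by
  induction c with
  | zero => rw [hF.zero, sum_range_zero]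
  | succ c ih => rw [hF.succ, ih, sum_range_succ]

lemma one_sub_X_pow_mul_top (hF : IsCharacterSystem k F) (n : ℕ) :
    (1 - X ^ n) * F (k + 1) n =
      ∑ j ∈ range k, if j < n then X ^ n * F (k - j) (n - (j + 1)) else 0 := by
  rw [sub_mul, one_mul, sub_eq_iff_eq_add']
  conv_lhs => rw [hF.eq_sum, sum_range_succ']
  simp [add_comm]

theorem unique (hF : IsCharacterSystem k F) (hG : IsCharacterSystem k G) : F = G := by
  suffices h : ∀ n c, F c n = G c n from funext fun c => funext fun n => h n c
  intro n
  induction n using Nat.strong_induction_on with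
  | _ n ih =>
  have htop : F (k + 1) n = G (k + 1) n := by
    rcases Nat.eq_zero_or_pos n with rfl | hn
    · rw [hF.top_zero, hG.top_zero]
    refine mul_left_cancel₀ (one_sub_X_pow_ne_zero hn.ne') ?_
    rw [hF.one_sub_X_pow_mul_top, hG.one_sub_X_pow_mul_top]
    refine sum_congr rfl fun j _ => ?_
    split_ifs
    · rw [ih _ (by omega)]
    · rfl
  intro c
  induction c with
  | zero => rw [hF.zero, hG.zero]
  | succ c ihc =>
    rw [hF.succ, hG.succ, ihc]
    rcases c with _ | c
    · simp [htop]
    · split_ifs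
      · rw [ih _ (by omega)]
      · rfl

end IsCharacterSystem

def admissibleSeries (k c n : ℕ) : PowerSeries 𝕜 :=
  X ^ n * PowerSeries.mk fun d => ((admissibleSet k c n d).ncard : 𝕜)

lemma admissibleSet_zero_particles (k c d : ℕ) :
    admissibleSet k c 0 d = {a | a = 0 ∧ 0 < c ∧ d = 0} := by
  ext a
  simp only [admissibleSet, Set.mem_ofPred_eq]
  constructor
  · rintro ⟨-, h0, hn, hd⟩
    have ha : a = 0 := by
      ext i
      exact Nat.eq_zero_of_le_zero ((le_degree i a).trans_eq hn)
    subst ha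
    simp_all
  · rintro ⟨rfl, h0, rfl⟩
    simp [h0]

theorem isCharacterSystem_admissibleSeries (k : ℕ) :
    IsCharacterSystem k (admissibleSeries (𝕜 := 𝕜) k) where
  zero n := by ext; simp [admissibleSeries, admissibleSet, coeff_X_pow_mul']
  top_zero := by
    ext d
    simp only [admissibleSeries, pow_zero, one_mul, coeff_mk, coeff_one,
      admissibleSet_zero_particles, Nat.succ_pos, true_and]
    split_ifs with hd <;> simp [hd]
  succ c n := by
    rw [admissibleSeries, admissibleSeries, admissibleSeries,
      show (if c ≤ n then X ^ n * (X ^ (n - c) * _) else 0) =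
        X ^ n * if c ≤ n then X ^ (n - c) * PowerSeries.mk fun d =>
          ((admissibleSet k (k + 1 - c) (n - c) d).ncard : 𝕜) else 0 by split_ifs <;> simp,
      ← mul_add]
    congr 1
    ext d
    rw [coeff_mk, ncard_admissibleSet_succ, ncard_admissibleSet_head]
    split_ifs <;> simp_all [coeff_X_pow_mul']

end System

section Transfer

def multiplicities (k n : ℕ) : Finset ℕ :=
  (range (n + 1)).filter fun r => (k + 1) * r ≤ n

lemma mem_multiplicities {k n r : ℕ} : r ∈ multiplicities k n ↔ (k + 1) * r ≤ n := by
  rw [multiplicities, mem_filter, mem_range, and_iff_right_iff_imp]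
  intro h
  have := Nat.le_mul_of_pos_left (n := k + 1) r (by omega)
  omega

lemma multiplicities_of_lt {k n : ℕ} (hn : n < k + 1) : multiplicities k n = {0} := by
  ext r
  rw [mem_multiplicities, mem_singleton]
  constructor
  · intro h
    by_contra hr
    have := Nat.le_mul_of_pos_right (k + 1) (Nat.pos_of_ne_zero hr)
    omega
  · rintro rfl
    simp

def transferExponent (k c r N : ℕ) : ℕ :=
  (k + 1) * r ^ 2 + (k + 2 - c) * r + 2 * r * N

/-- The fermionic sum of level `k + 1`, split according to the multiplicity `r` of the largest
part `k + 1`, written in terms of the level-`k` family `F`. -/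
def transfer (k : ℕ) (F : ℕ → ℕ → PowerSeries 𝕜) (c n : ℕ) : PowerSeries 𝕜 :=
  ∑ r ∈ multiplicities k n,
    X ^ transferExponent k c r (n - (k + 1) * r) * (qPochhammer r)⁻¹ * F c (n - (k + 1) * r)

variable {k c n : ℕ}

lemma transferExponent_succ (hc : c ≤ k + 1) (r N : ℕ) :
    transferExponent k c r N = transferExponent k (c + 1) r N + r := by
  simp only [transferExponent, show k + 2 - c = k + 2 - (c + 1) + 1 by omega]
  ring

lemma transferExponent_head (hc : c ≤ k + 1) (r M : ℕ) :
    transferExponent k (c + 1) r (c + M) + (c + M) =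
      ((k + 1) * r + c + M) + transferExponent k (k + 2 - c) r M := by
  simp only [transferExponent]
  zify [show c + 1 ≤ k + 2 by omega, show k + 2 - c ≤ k + 2 by omega,
    show c ≤ k + 2 by omega]
  ring

lemma transferExponent_shift (hc : c ≤ k + 1) (s N : ℕ) :
    transferExponent k (c + 1) (s + 1) N =
      ((k + 1) * (s + 1) + N) + transferExponent k (k + 2 - c) s (k + 1 - c + N) +
        (k + 1 - c + N) := by
  simp only [transferExponent]
  zify [show c + 1 ≤ k + 2 by omega, show k + 2 - c ≤ k + 2 by omega,
    show c ≤ k + 2 by omega, hc]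
  ring

lemma sum_head_eq (hc : c ≤ k + 1) (hcn : c ≤ n) (G : ℕ → PowerSeries 𝕜) :
    ∑ r ∈ multiplicities k n, (if c ≤ n - (k + 1) * r then
        X ^ (transferExponent k (c + 1) r (n - (k + 1) * r) + (n - (k + 1) * r)) *
          (qPochhammer r)⁻¹ * G (n - (k + 1) * r - c) else 0) =
      ∑ s ∈ multiplicities k (n - c),
        X ^ (n + transferExponent k (k + 2 - c) s (n - c - (k + 1) * s)) *
          (qPochhammer s)⁻¹ * G (n - c - (k + 1) * s) := by
  have hset : (multiplicities k n).filter (fun r => c ≤ n - (k + 1) * r) =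
      multiplicities k (n - c) := by
    ext r
    simp only [mem_filter, mem_multiplicities]
    omega
  rw [← sum_filter, hset]
  refine sum_congr rfl fun r hr => ?_
  rw [mem_multiplicities] at hr
  obtain ⟨M, hM⟩ : ∃ M, n - (k + 1) * r = c + M := ⟨n - c - (k + 1) * r, by omega⟩
  rw [hM, transferExponent_head hc, show n - c - (k + 1) * r = M by omega,
    show c + M - c = M by omega, show (k + 1) * r + c + M = n by omega]

lemma sum_shift_eq (hc : c ≤ k + 1) (hcn : c ≤ n) (G : ℕ → PowerSeries 𝕜) :
    ∑ r ∈ multiplicities k n, X ^ transferExponent k (c + 1) r (n - (k + 1) * r) *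
        ((1 - X ^ r) * (qPochhammer r)⁻¹) * G (n - (k + 1) * r) =
      ∑ s ∈ multiplicities k (n - c), (if k + 1 - c ≤ n - c - (k + 1) * s then
        X ^ (n + transferExponent k (k + 2 - c) s (n - c - (k + 1) * s) +
          (n - c - (k + 1) * s)) * (qPochhammer s)⁻¹ *
            G (n - c - (k + 1) * s - (k + 1 - c)) else 0) := by
  rw [← sum_filter, ← sum_filter_of_ne (p := fun r => r ≠ 0) fun r _ h hr => h (by simp [hr])]
  refine sum_nbij' (· - 1) (· + 1) ?_ ?_ ?_ ?_ ?_
  · intro r hr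
    obtain ⟨hr, hr0⟩ := mem_filter.1 hr
    obtain ⟨s, rfl⟩ : ∃ s, r = s + 1 := ⟨r - 1, by omega⟩
    rw [mem_multiplicities, mul_add_one] at hr
    simp only [mem_filter, mem_multiplicities, Nat.add_sub_cancel]
    omega
  · intro s hs
    simp only [mem_filter, mem_multiplicities] at hs ⊢
    rw [mul_add_one]
    omega
  · intro r hr
    have := (mem_filter.1 hr).2
    omega
  · intro s _
    simp
  · intro r hr
    obtain ⟨hr, hr0⟩ := mem_filter.1 hr
    obtain ⟨s, rfl⟩ : ∃ s, r = s + 1 := ⟨r - 1, by omega⟩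
    rw [mem_multiplicities] at hr
    obtain ⟨N, hN⟩ : ∃ N, n = (k + 1) * (s + 1) + N := ⟨n - (k + 1) * (s + 1), by omega⟩
    have hM : n - c - (k + 1) * s = k + 1 - c + N := by rw [hN, mul_add_one]; omega
    rw [Nat.add_sub_cancel, hM, Nat.add_sub_cancel_left,
      one_sub_X_pow_mul_inv_qPochhammer, show n - (k + 1) * (s + 1) = N by omega,
      transferExponent_shift hc, ← hN]

variable {F : ℕ → ℕ → PowerSeries 𝕜}

lemma transfer_of_lt (hn : n < k + 1) : transfer k F c n = F c n := by
  simp [transfer, multiplicities_of_lt hn, transferExponent, qPochhammer]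

lemma IsCharacterSystem.transfer_succ (hF : IsCharacterSystem k F) (hc : c ≤ k + 1)
    (hcn : c ≤ n) :
    transfer k F (c + 1) n = transfer k F c n + X ^ n * transfer k F (k + 2 - c) (n - c) := by
  have hsplit : ∀ r ∈ multiplicities k n,
      X ^ transferExponent k (c + 1) r (n - (k + 1) * r) * (qPochhammer r)⁻¹ *
        F (c + 1) (n - (k + 1) * r) =
      X ^ transferExponent k c r (n - (k + 1) * r) * (qPochhammer r)⁻¹ *
          F c (n - (k + 1) * r) +
        (X ^ transferExponent k (c + 1) r (n - (k + 1) * r) *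
          ((1 - X ^ r) * (qPochhammer r)⁻¹) * F c (n - (k + 1) * r) +
        if c ≤ n - (k + 1) * r then
          X ^ (transferExponent k (c + 1) r (n - (k + 1) * r) + (n - (k + 1) * r)) *
            (qPochhammer r)⁻¹ * F (k + 1 - c) (n - (k + 1) * r - c) else 0) := by
    intro r _
    rw [hF.succ, transferExponent_succ hc]
    split_ifs <;> ring
  have hsplit' : ∀ s ∈ multiplicities k (n - c),
      X ^ n * (X ^ transferExponent k (k + 2 - c) s (n - c - (k + 1) * s) * (qPochhammer s)⁻¹ *
        F (k + 2 - c) (n - c - (k + 1) * s)) =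
      X ^ (n + transferExponent k (k + 2 - c) s (n - c - (k + 1) * s)) *
          (qPochhammer s)⁻¹ * F (k + 1 - c) (n - c - (k + 1) * s) +
        if k + 1 - c ≤ n - c - (k + 1) * s then
          X ^ (n + transferExponent k (k + 2 - c) s (n - c - (k + 1) * s) +
            (n - c - (k + 1) * s)) * (qPochhammer s)⁻¹ *
              F c (n - c - (k + 1) * s - (k + 1 - c)) else 0 := by
    intro s _
    rw [show k + 2 - c = k + 1 - c + 1 by omega, hF.succ, show k + 1 - (k + 1 - c) = c by omega]
    split_ifs <;> ring
  rw [transfer, sum_congr rfl hsplit, sum_add_distrib, sum_add_distrib, transfer, transfer,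
    Finset.mul_sum, sum_congr rfl hsplit', sum_add_distrib, sum_shift_eq hc hcn,
    sum_head_eq hc hcn, add_comm (∑ s ∈ _, _) (∑ s ∈ _, _)]

theorem isCharacterSystem_transfer (hF : IsCharacterSystem k F) :
    IsCharacterSystem (k + 1) (transfer k F) where
  zero n := sum_eq_zero fun r _ => by rw [hF.zero, mul_zero]
  top_zero := by
    rw [transfer_of_lt k.succ_pos, hF.succ, hF.top_zero, if_neg (by omega), add_zero]
  succ c n := by
    rcases le_or_gt c (k + 1) with hc | hc
    · rcases le_or_gt c n with hcn | hcn
      · rw [if_pos hcn, hF.transfer_succ hc hcn]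
      · rw [if_neg (by omega), add_zero, transfer_of_lt (by omega), transfer_of_lt (by omega),
          hF.succ, if_neg (by omega), add_zero]
    · have hzero : ∀ m, transfer k F 0 m = 0 :=
        fun m => sum_eq_zero fun r _ => by rw [hF.zero, mul_zero]
      rw [show k + 1 + 1 - c = 0 by omega, hzero, mul_zero, ite_self, add_zero, transfer]
      refine sum_congr rfl fun r _ => ?_
      rw [hF.succ, show k + 1 - c = 0 by omega, hF.zero, mul_zero, ite_self, add_zero]
      simp only [transferExponent, show k + 2 - (c + 1) = 0 by omega,
        show k + 2 - c = 0 by omega]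

end Transfer

section Fermionic

lemma mem_restricted {k n : ℕ} {m : Fin k → ℕ} :
    m ∈ restricted k n ↔ ∑ a : Fin k, ((a : ℕ) + 1) * m a = n := by
  rw [restricted, mem_filter, and_iff_right_iff_imp]
  rintro rfl
  refine Fintype.mem_piFinset.2 fun a => mem_range.2 (Nat.lt_succ_of_le ?_)
  calc m a ≤ ((a : ℕ) + 1) * m a := Nat.le_mul_of_pos_left _ a.val.succ_pos
    _ ≤ _ := single_le_sum (f := fun a : Fin k => ((a : ℕ) + 1) * m a)
      (fun _ _ => Nat.zero_le _) (mem_univ a)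

lemma sum_restricted_succ {M : Type*} [AddCommMonoid M] (k n : ℕ)
    (f : (Fin (k + 1) → ℕ) → M) :
    ∑ m ∈ restricted (k + 1) n, f m =
      ∑ r ∈ multiplicities k n, ∑ m ∈ restricted k (n - (k + 1) * r), f (Fin.snoc m r) := by
  rw [sum_sigma']
  refine sum_nbij' (fun m => ⟨m (Fin.last k), Fin.init m⟩) (fun p => Fin.snoc p.2 p.1)
    ?_ ?_ (fun m _ => Fin.snoc_init_self m) (fun p _ => by simp) (fun m _ => by
      simp only [Fin.snoc_init_self])
  · intro m hm
    rw [mem_restricted, Fin.sum_univ_castSucc] at hm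
    simp only [mem_sigma, mem_multiplicities, mem_restricted, Fin.init, Fin.val_last,
      Fin.val_castSucc] at hm ⊢
    omega
  · rintro ⟨r, m⟩ hp
    simp only [mem_sigma, mem_multiplicities, mem_restricted] at hp
    rw [mem_restricted, Fin.sum_univ_castSucc]
    simp only [Fin.snoc_castSucc, Fin.snoc_last, Fin.val_castSucc, Fin.val_last]
    omega

lemma fermiExp2_snoc (k b r : ℕ) (m : Fin k → ℕ) :
    fermiExp2 (k + 1) b (Fin.snoc m r) =
      fermiExp2 k b m + 2 * r * ∑ a : Fin k, ((a : ℕ) + 1) * m a +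
        2 * (k + 1) * r.choose 2 + (k + 1 - b) * r := by
  simp only [fermiExp2, sum_filter, Fintype.sum_prod_type, Fin.sum_univ_castSucc,
    Fin.snoc_castSucc, Fin.snoc_last, Fin.castSucc_lt_castSucc_iff, Fin.castSucc_lt_last,
    Fin.val_castSucc, Fin.val_last, lt_self_iff_false, if_true, if_false, add_zero,
    not_lt_of_gt (Fin.castSucc_lt_last _)]
  have hpair : ∀ x : Fin k,
      2 * (min (x : ℕ) k + 1) * m x * r = 2 * r * (((x : ℕ) + 1) * m x) :=
    fun x => by rw [min_eq_left x.is_lt.le]; ring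
  simp only [hpair, sum_add_distrib, sum_const_zero, ← Finset.mul_sum]
  ring

lemma two_mul_choose_two_add_self (r : ℕ) : 2 * r.choose 2 + r = r ^ 2 := by
  induction r with
  | zero => rfl
  | succ r ih => rw [Nat.choose_succ_succ', Nat.choose_one_right]; nlinarith

/-- `c = b₀ + 1`, so that `c = 0` is the empty condition `a 0 < 0`. -/
def fermionicSeries (k c n : ℕ) : PowerSeries 𝕜 :=
  if c = 0 then 0 else
    ∑ m ∈ restricted k n, X ^ (n + fermiExp2 k (c - 1) m) * (∏ a, qPochhammer (m a))⁻¹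

lemma fermionicSeries_succ (k c n : ℕ) :
    fermionicSeries (𝕜 := 𝕜) (k + 1) c n = transfer k (fermionicSeries k) c n := by
  rcases c with _ | b
  · simp [fermionicSeries, transfer]
  simp only [fermionicSeries, transfer, Nat.add_one_ne_zero, if_false, Nat.add_sub_cancel,
    sum_restricted_succ, Finset.mul_sum]
  refine sum_congr rfl fun r hr => sum_congr rfl fun m hm => ?_
  rw [mem_multiplicities] at hr
  rw [mem_restricted] at hm
  rw [Fin.prod_univ_castSucc]
  simp only [Fin.snoc_castSucc, Fin.snoc_last]
  rw [PowerSeries.mul_inv_rev, fermiExp2_snoc, hm]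
  have hexp : n + (fermiExp2 k b m + 2 * r * (n - (k + 1) * r) + 2 * (k + 1) * r.choose 2 +
      (k + 1 - b) * r) = transferExponent k (b + 1) r (n - (k + 1) * r) +
        (n - (k + 1) * r + fermiExp2 k b m) := by
    have := two_mul_choose_two_add_self r
    simp only [transferExponent, show k + 2 - (b + 1) = k + 1 - b by omega]
    obtain ⟨N, rfl⟩ : ∃ N, n = (k + 1) * r + N := ⟨n - (k + 1) * r, by omega⟩
    rw [Nat.add_sub_cancel_left]
    nlinarith
  rw [hexp, pow_add]
  ring

lemma fermionicSeries_zero_succ (b n : ℕ) :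
    fermionicSeries (𝕜 := 𝕜) 0 (b + 1) n = if n = 0 then 1 else 0 := by
  rcases eq_or_ne n 0 with rfl | hn <;> simp [fermionicSeries, restricted, fermiExp2, *, Ne.symm]

theorem isCharacterSystem_fermionicSeries_zero :
    IsCharacterSystem 0 (fermionicSeries (𝕜 := 𝕜) 0) where
  zero n := if_pos rfl
  top_zero := by rw [fermionicSeries_zero_succ, if_pos rfl]
  succ c n := by
    have hzero : ∀ m, fermionicSeries (𝕜 := 𝕜) 0 0 m = 0 := fun m => if_pos rfl
    rcases c with _ | b
    · rw [fermionicSeries_zero_succ, hzero, if_pos n.zero_le, zero_add, Nat.sub_zero,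
        fermionicSeries_zero_succ]
      rcases eq_or_ne n 0 with rfl | hn <;> simp [*]
    · rw [fermionicSeries_zero_succ, fermionicSeries_zero_succ,
        show 0 + 1 - (b + 1) = 0 by omega, hzero]
      simp

theorem isCharacterSystem_fermionicSeries (k : ℕ) :
    IsCharacterSystem k (fermionicSeries (𝕜 := 𝕜) k) := by
  induction k with
  | zero => exact isCharacterSystem_fermionicSeries_zero
  | succ k ih =>
    rw [show fermionicSeries (k + 1) = transfer k (fermionicSeries (𝕜 := 𝕜) k) from
      funext₂ (fermionicSeries_succ k)]
    exact isCharacterSystem_transfer ih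

end Fermionic

end

end FermionicFormula

theorem fermionic_formula_k2_general (k b0 : ℕ) :
    (∀ a : ℕ →₀ ℕ,
      ((∀ i, a i ≤ k) ∧ (∀ i, a i + a (i + 1) ≤ k)) ↔ (∀ i, a i + a (i + 1) ≤ k)) ∧
    ∀ n : ℕ,
      (PowerSeries.mk fun d : ℕ =>
        (Set.ncard {a : ℕ →₀ ℕ |
            (∀ i, a i + a (i + 1) ≤ k) ∧ a 0 ≤ b0 ∧
            (a.sum fun _ v => v) = n ∧ (a.sum fun i v => i * v) = d} : ℂ)) =
      ∑ m ∈ restricted k n,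
        (PowerSeries.X : PowerSeries ℂ) ^ (fermiExp2 k b0 m) *
          (∏ a : Fin k, ∏ j ∈ Finset.range (m a),
            (1 - (PowerSeries.X : PowerSeries ℂ) ^ (j + 1)))⁻¹ := by
  refine ⟨fun a => and_iff_right_of_imp fun h i => (Nat.le_add_right _ _).trans (h i),
    fun n => ?_⟩
  have h := congrFun₂ ((FermionicFormula.isCharacterSystem_admissibleSeries k).unique
    (FermionicFormula.isCharacterSystem_fermionicSeries (𝕜 := ℂ) k)) (b0 + 1) n
  simp only [FermionicFormula.admissibleSeries, FermionicFormula.admissibleSet, Nat.lt_succ_iff,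
    FermionicFormula.fermionicSeries, Nat.add_one_ne_zero, if_false, Nat.add_sub_cancel,
    pow_add, mul_assoc, ← Finset.mul_sum] at h
  exact mul_left_cancel₀ (pow_ne_zero n X_ne_zero) h

/-- A sequence `(a_i)` of nonnegative integers (finitely many nonzero) is
`(k,2)`-admissible iff `a_i + a_{i+1} ≤ k` for all `i`; and the character
`Σ_{a ∈ C_{b₀}^{(k,2)}} q^{Σ j a_j} z^{Σ a_j}` equals
`Σ_n z^n Σ_{m_1+2m_2+⋯+km_k=n} q^{½(mᵀAm − diagA·m)+c·m}/((q)_{m_1}⋯(q)_{m_k})`,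
stated here as an identity of power series in `q` for each fixed `n` (the coefficient of
`z^n`), with `A_{ab} = 2min(a,b)` and `c = (0,…,0,1,2,…,k−b₀)`. -/
theorem fermionic_formula_k2 (k b0 : ℕ) (hk : 1 ≤ k) (hb0 : b0 ≤ k) :
    (∀ a : ℕ →₀ ℕ,
      ((∀ i, a i ≤ k) ∧ (∀ i, a i + a (i + 1) ≤ k)) ↔ (∀ i, a i + a (i + 1) ≤ k)) ∧
    ∀ n : ℕ,
      (PowerSeries.mk fun d : ℕ =>
        (Set.ncard {a : ℕ →₀ ℕ |
            (∀ i, a i + a (i + 1) ≤ k) ∧ a 0 ≤ b0 ∧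
            (a.sum fun _ v => v) = n ∧ (a.sum fun i v => i * v) = d} : ℂ)) =
      ∑ m ∈ restricted k n,
        (PowerSeries.X : PowerSeries ℂ) ^ (fermiExp2 k b0 m) *
          (∏ a : Fin k, ∏ j ∈ Finset.range (m a),
            (1 - (PowerSeries.X : PowerSeries ℂ) ^ (j + 1)))⁻¹ :=
  fermionic_formula_k2_general k b0
end

section
/- For k = 1 and b_0 = 0 or 1, the character of (1,2)-admissible configurations (sequences of 0s and 1s with no two consecutive 1s, with a_0 ≤ b_0) satisfies: Σ over such sequences of q^{Σ j a_j} z^{Σ a_j} = Σ_{m ≥ 0} q^{m(m−1)+ (1−b_0)m} z^m / (q)_m. -/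
/-!
An admissible configuration is the indicator function of a finite set `S ⊆ ℕ` with no two
consecutive elements and `min S ≥ 1 - b₀`, and its weight is the element sum of `S`. Let `F_m(n)`
be the generating function of such `n`-element sets all of whose elements are `≥ m`. Shifting
every element by one gives `F_{m+1}(n) = qⁿ F_m(n)`, hence `F_m(n) = q^{mn} F_0(n)`; splitting
off the element `m` gives `F_m(n+1) = F_{m+1}(n+1) + q^m F_{m+2}(n)`. At `m = 0` these combine to
`(1 - qⁿ⁺¹) F_0(n+1) = q^{2n} F_0(n)`, so `F_0(n) (q)_n = q^{n(n-1)}`.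
-/

open PowerSeries Finset

section SumGenFun

variable (R : Type*) [Semiring R]

noncomputable def sumGenFun (A : Set (Finset ℕ)) : R⟦X⟧ :=
  PowerSeries.mk fun d => ({S ∈ A | ∑ i ∈ S, i = d}.ncard : R)

variable {R}

lemma finite_setOf_sum_eq (d : ℕ) : {S : Finset ℕ | ∑ i ∈ S, i = d}.Finite := by
  refine (range (d + 1)).powerset.finite_toSet.subset fun S hS => ?_
  simp only [coe_powerset, Set.mem_preimage, Set.mem_powerset_iff, coe_subset]
  intro i hi
  exact mem_range_succ_iff.2 (hS ▸ single_le_sum (f := id) (fun _ _ => Nat.zero_le _) hi)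

lemma sumGenFun_union {A B : Set (Finset ℕ)} (h : Disjoint A B) :
    sumGenFun R (A ∪ B) = sumGenFun R A + sumGenFun R B := by
  ext d
  have hfin {C : Set (Finset ℕ)} : {S ∈ C | ∑ i ∈ S, i = d}.Finite :=
    (finite_setOf_sum_eq d).subset fun _ hS => hS.2
  have hsplit : {S ∈ A ∪ B | ∑ i ∈ S, i = d} =
      {S ∈ A | ∑ i ∈ S, i = d} ∪ {S ∈ B | ∑ i ∈ S, i = d} := by
    ext S; simp only [Set.mem_union, Set.mem_ofPred, or_and_right]
  rw [sumGenFun, sumGenFun, sumGenFun, map_add, coeff_mk, coeff_mk, coeff_mk, hsplit,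
    Set.ncard_union_eq (h.mono (Set.sep_subset _ _) (Set.sep_subset _ _)) hfin hfin,
    Nat.cast_add]

lemma sumGenFun_image {A : Set (Finset ℕ)} {f : Finset ℕ → Finset ℕ} (hf : Set.InjOn f A)
    {k : ℕ} (hk : ∀ S ∈ A, ∑ i ∈ f S, i = ∑ i ∈ S, i + k) :
    sumGenFun R (f '' A) = X ^ k * sumGenFun R A := by
  ext d
  rw [coeff_X_pow_mul', sumGenFun, sumGenFun, coeff_mk, coeff_mk]
  split_ifs with hd
  · have : {T ∈ f '' A | ∑ i ∈ T, i = d} = f '' {S ∈ A | ∑ i ∈ S, i = d - k} := by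
      ext T
      simp only [Set.mem_ofPred, Set.mem_image]
      constructor
      · rintro ⟨⟨S, hS, rfl⟩, hT⟩
        exact ⟨S, ⟨hS, by rw [hk S hS] at hT; omega⟩, rfl⟩
      · rintro ⟨S, ⟨hS, hSd⟩, rfl⟩
        exact ⟨⟨S, hS, rfl⟩, by rw [hk S hS]; omega⟩
    rw [this, (hf.mono (Set.sep_subset _ _)).ncard_image]
  · have : {T ∈ f '' A | ∑ i ∈ T, i = d} = ∅ := by
      refine Set.eq_empty_of_forall_notMem ?_
      rintro _ ⟨⟨S, hS, rfl⟩, hT⟩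
      rw [hk S hS] at hT
      omega
    rw [this, Set.ncard_empty, Nat.cast_zero]

lemma sumGenFun_singleton_empty : sumGenFun R {∅} = 1 := by
  ext d
  rw [sumGenFun, coeff_mk, coeff_one]
  have : {S ∈ ({∅} : Set (Finset ℕ)) | ∑ i ∈ S, i = d} = if d = 0 then {∅} else ∅ := by
    ext S; split_ifs <;> aesop
  rw [this]; split_ifs <;> simp

end SumGenFun

def sparseSets (m n : ℕ) : Set (Finset ℕ) :=
  {S | S.card = n ∧ ∀ i ∈ S, m ≤ i ∧ i + 1 ∉ S}

lemma sparseSets_zero_right (m : ℕ) : sparseSets m 0 = {∅} := by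
  ext S
  simp +contextual [sparseSets]

lemma exists_map_succ_eq {T : Finset ℕ} (hT : 0 ∉ T) :
    ∃ S : Finset ℕ, S.map (addRightEmbedding 1) = T := by
  refine ⟨T.image (· - 1), ?_⟩
  ext i
  simp only [mem_map, mem_image, addRightEmbedding_apply]
  constructor
  · rintro ⟨_, ⟨j, hj, rfl⟩, rfl⟩
    rwa [Nat.sub_add_cancel (Nat.pos_of_ne_zero (ne_of_mem_of_not_mem hj hT))]
  · intro hi
    exact ⟨i - 1, ⟨i, hi, rfl⟩,
      Nat.sub_add_cancel (Nat.pos_of_ne_zero (ne_of_mem_of_not_mem hi hT))⟩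

lemma map_succ_mem_sparseSets_iff {m n : ℕ} {S : Finset ℕ} :
    S.map (addRightEmbedding 1) ∈ sparseSets (m + 1) n ↔ S ∈ sparseSets m n := by
  have h (i : ℕ) : i + 1 + 1 ∈ S.map (addRightEmbedding 1) ↔ i + 1 ∈ S :=
    mem_map' (addRightEmbedding 1)
  simp only [sparseSets, Set.mem_ofPred, card_map, forall_mem_map, addRightEmbedding_apply, h,
    add_le_add_iff_right]

lemma sparseSets_succ_left (m n : ℕ) :
    sparseSets (m + 1) n = Finset.map (addRightEmbedding 1) '' sparseSets m n := by
  ext T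
  constructor
  · intro hT
    obtain ⟨S, rfl⟩ := exists_map_succ_eq fun h0 => by have := (hT.2 0 h0).1; omega
    exact ⟨S, map_succ_mem_sparseSets_iff.1 hT, rfl⟩
  · rintro ⟨S, hS, rfl⟩
    exact map_succ_mem_sparseSets_iff.2 hS

lemma mem_sparseSets_succ_iff {m n : ℕ} {S : Finset ℕ} (hm : m ∉ S) :
    S ∈ sparseSets (m + 1) n ↔ S ∈ sparseSets m n := by
  refine and_congr_right' (forall₂_congr fun i hi => and_congr_left' ?_)
  have : i ≠ m := ne_of_mem_of_not_mem hi hm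
  omega

lemma insert_mem_sparseSets_iff {m n : ℕ} {S : Finset ℕ} (hm : m ∉ S) :
    insert m S ∈ sparseSets m (n + 1) ↔ S ∈ sparseSets (m + 2) n := by
  simp only [sparseSets, Set.mem_ofPred, card_insert_of_notMem hm, Nat.add_right_cancel_iff]
  rw [forall_mem_insert]
  simp only [mem_insert, not_or, le_refl, true_and]
  refine and_congr_right' ⟨fun ⟨⟨_, hm1⟩, hS⟩ i hi => ?_, fun hS => ⟨⟨by omega, ?_⟩, ?_⟩⟩
  · have := ne_of_mem_of_not_mem hi hm
    have := ne_of_mem_of_not_mem hi hm1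
    exact ⟨by have := (hS i hi).1; omega, (hS i hi).2.2⟩
  · exact fun h => by have := (hS _ h).1; omega
  · exact fun i hi => ⟨by have := (hS i hi).1; omega, by have := (hS i hi).1; omega, (hS i hi).2⟩

lemma sparseSets_succ_right (m n : ℕ) :
    sparseSets m (n + 1) = sparseSets (m + 1) (n + 1) ∪ insert m '' sparseSets (m + 2) n := by
  ext S
  by_cases hm : m ∈ S
  · have hS : S ∉ sparseSets (m + 1) (n + 1) := fun h => by have := (h.2 m hm).1; omega
    simp only [Set.mem_union, hS, false_or, Set.mem_image]
    constructor
    · intro h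
      refine ⟨S.erase m, (insert_mem_sparseSets_iff (notMem_erase m S)).1 ?_, insert_erase hm⟩
      rwa [insert_erase hm]
    · rintro ⟨T, hT, rfl⟩
      exact (insert_mem_sparseSets_iff fun h => by have := (hT.2 m h).1; omega).2 hT
  · have hS : S ∉ insert m '' sparseSets (m + 2) n := by
      rintro ⟨T, -, rfl⟩
      exact hm (mem_insert_self m T)
    simp only [Set.mem_union, hS, or_false, mem_sparseSets_succ_iff hm]

section SparseGenFun

variable {R : Type*}

lemma sumGenFun_sparseSets_succ_left [Semiring R] (m n : ℕ) :
    sumGenFun R (sparseSets (m + 1) n) = X ^ n * sumGenFun R (sparseSets m n) := by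
  rw [sparseSets_succ_left]
  refine sumGenFun_image (map_injective _).injOn fun S hS => ?_
  simp only [sum_map, addRightEmbedding_apply, sum_add_distrib, sum_const, hS.1, smul_eq_mul,
    mul_one]

lemma sumGenFun_sparseSets_eq_X_pow_mul [Semiring R] (m n : ℕ) :
    sumGenFun R (sparseSets m n) = X ^ (m * n) * sumGenFun R (sparseSets 0 n) := by
  induction m with
  | zero => rw [zero_mul, pow_zero, one_mul]
  | succ m ih =>
    rw [sumGenFun_sparseSets_succ_left, ih, ← mul_assoc, ← pow_add, Nat.succ_mul, add_comm]

lemma sumGenFun_sparseSets_succ_right [Semiring R] (m n : ℕ) :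
    sumGenFun R (sparseSets m (n + 1)) =
      sumGenFun R (sparseSets (m + 1) (n + 1)) + X ^ m * sumGenFun R (sparseSets (m + 2) n) := by
  have hm {T : Finset ℕ} (hT : T ∈ sparseSets (m + 2) n) : m ∉ T := fun h => by
    have := (hT.2 m h).1; omega
  have hdisj : Disjoint (sparseSets (m + 1) (n + 1)) (insert m '' sparseSets (m + 2) n) := by
    refine Set.disjoint_left.2 ?_
    rintro _ hS ⟨T, -, rfl⟩
    have := (hS.2 m (mem_insert_self m T)).1
    omega
  have hinj : Set.InjOn (insert m) (sparseSets (m + 2) n) := fun T hT T' hT' h => by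
    rw [← erase_insert (hm hT), h, erase_insert (hm hT')]
  rw [sparseSets_succ_right, sumGenFun_union hdisj,
    sumGenFun_image hinj fun T hT => by rw [sum_insert (hm hT), add_comm]]

lemma sumGenFun_sparseSets_zero_mul_prod [CommRing R] (n : ℕ) :
    sumGenFun R (sparseSets 0 n) * ∏ j ∈ range n, (1 - X ^ (j + 1)) = X ^ (n * (n - 1)) := by
  induction n with
  | zero => rw [sparseSets_zero_right, sumGenFun_singleton_empty, prod_range_zero, mul_one,
      zero_mul, pow_zero]
  | succ n ih =>
    have hrec : sumGenFun R (sparseSets 0 (n + 1)) =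
        X ^ (n + 1) * sumGenFun R (sparseSets 0 (n + 1)) +
          X ^ (2 * n) * sumGenFun R (sparseSets 0 n) := by
      conv_lhs => rw [sumGenFun_sparseSets_succ_right, sumGenFun_sparseSets_eq_X_pow_mul 1,
        sumGenFun_sparseSets_eq_X_pow_mul 2, pow_zero, one_mul, one_mul]
    calc sumGenFun R (sparseSets 0 (n + 1)) * ∏ j ∈ range (n + 1), (1 - X ^ (j + 1))
        = (sumGenFun R (sparseSets 0 (n + 1)) -
            X ^ (n + 1) * sumGenFun R (sparseSets 0 (n + 1))) *
              ∏ j ∈ range n, (1 - X ^ (j + 1)) := by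
          rw [prod_range_succ]; ring
      _ = X ^ (2 * n + n * (n - 1)) := by rw [sub_eq_of_eq_add' hrec, mul_assoc, ih, pow_add]
      _ = X ^ ((n + 1) * (n + 1 - 1)) := by
          rcases n with _ | n
          · rfl
          · rw [Nat.add_sub_cancel, Nat.add_sub_cancel]; ring

end SparseGenFun

section ZeroOneFinsupp

variable {α M : Type*}

lemma Finsupp.sum_of_le_one [AddCommMonoid M] {a : α →₀ ℕ} (ha : ∀ i, a i ≤ 1)
    (f : α → ℕ → M) :
    a.sum f = ∑ i ∈ a.support, f i 1 :=
  Finset.sum_congr rfl fun i hi => by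
    rw [le_antisymm (ha i) (Nat.one_le_iff_ne_zero.2 (Finsupp.mem_support_iff.1 hi))]

lemma Finsupp.apply_eq_ite_of_le_one [DecidableEq α] {a : α →₀ ℕ} (ha : ∀ i, a i ≤ 1) (i : α) :
    a i = if i ∈ a.support then 1 else 0 := by
  by_cases h : i ∈ a.support
  · rw [if_pos h]
    exact le_antisymm (ha i) (Nat.one_le_iff_ne_zero.2 (Finsupp.mem_support_iff.1 h))
  · rw [if_neg h]
    exact Finsupp.notMem_support_iff.1 h

lemma ncard_setOf_le_one_and (P : Finset α → Prop) :
    {a : α →₀ ℕ | (∀ i, a i ≤ 1) ∧ P a.support}.ncard = {S | P S}.ncard := by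
  classical
  have himage : Finsupp.support '' {a : α →₀ ℕ | (∀ i, a i ≤ 1) ∧ P a.support} = {S | P S} := by
    ext S
    refine ⟨?_, fun hS => ⟨S.val.toFinsupp, ⟨fun i => ?_, ?_⟩, ?_⟩⟩
    · rintro ⟨a, ⟨-, ha⟩, rfl⟩
      exact ha
    · rw [Multiset.toFinsupp_apply]
      exact Multiset.nodup_iff_count_le_one.1 S.nodup i
    · rwa [Multiset.toFinsupp_support, val_toFinset]
    · rw [Multiset.toFinsupp_support, val_toFinset]
  have hinj : Set.InjOn Finsupp.support {a : α →₀ ℕ | (∀ i, a i ≤ 1) ∧ P a.support} :=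
    fun a ha b hb h => Finsupp.ext fun i => by
      rw [Finsupp.apply_eq_ite_of_le_one ha.1, Finsupp.apply_eq_ite_of_le_one hb.1, h]
  rw [← himage, hinj.ncard_image]

end ZeroOneFinsupp

lemma admissible_iff_support_mem_sparseSets {b0 n d : ℕ} (hb0 : b0 ≤ 1) {a : ℕ →₀ ℕ}
    (ha : ∀ i, a i ≤ 1) :
    ((∀ i, a i * a (i + 1) = 0) ∧ a 0 ≤ b0 ∧
        (a.sum fun _ v => v) = n ∧ (a.sum fun i v => i * v) = d) ↔
      a.support ∈ sparseSets (1 - b0) n ∧ ∑ i ∈ a.support, i = d := by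
  simp only [Finsupp.sum_of_le_one ha, Finsupp.apply_eq_ite_of_le_one ha, sum_const,
    smul_eq_mul, mul_one, sparseSets, Set.mem_ofPred]
  generalize a.support = S
  have hadj : (∀ i, ((if i ∈ S then 1 else 0) * if i + 1 ∈ S then 1 else 0) = 0) ↔
      ∀ i ∈ S, i + 1 ∉ S := by
    simp only [mul_eq_zero, ite_eq_right_iff, one_ne_zero, imp_false, imp_iff_not_or]
  have hmin : (if 0 ∈ S then 1 else 0) ≤ b0 ↔ ∀ i ∈ S, 1 - b0 ≤ i := by
    by_cases h0 : 0 ∈ S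
    · rw [if_pos h0]
      exact ⟨fun h i _ => by omega, fun h => by have := h 0 h0; omega⟩
    · rw [if_neg h0]
      exact ⟨fun _ i hi => by have := ne_of_mem_of_not_mem hi h0; omega, fun _ => Nat.zero_le b0⟩
  rw [hadj, hmin, forall₂_and]
  tauto

lemma ncard_admissible_eq {b0 : ℕ} (hb0 : b0 ≤ 1) (n d : ℕ) :
    {a : ℕ →₀ ℕ | (∀ i, a i * a (i + 1) = 0) ∧ (∀ i, a i ≤ 1) ∧ a 0 ≤ b0 ∧
        (a.sum fun _ v => v) = n ∧ (a.sum fun i v => i * v) = d}.ncard =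
      {S ∈ sparseSets (1 - b0) n | ∑ i ∈ S, i = d}.ncard := by
  rw [← ncard_setOf_le_one_and]
  congr 1
  ext a
  refine ⟨fun ⟨hadj, hle, h0, hn, hd⟩ => ⟨hle, ?_⟩, fun ⟨hle, h⟩ => ?_⟩
  · exact (admissible_iff_support_mem_sparseSets hb0 hle).1 ⟨hadj, h0, hn, hd⟩
  · obtain ⟨hadj, h0, hn, hd⟩ := (admissible_iff_support_mem_sparseSets hb0 hle).2 h
    exact ⟨hadj, hle, h0, hn, hd⟩

/-- For `k = 1` and `b₀ ∈ {0, 1}`, the character of `(1,2)`-admissible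
configurations (sequences of `0`s and `1`s with no two consecutive `1`s, and `a_0 ≤ b₀`)
satisfies `Σ q^{Σ j a_j} z^{Σ a_j} = Σ_{m≥0} q^{m(m−1)+(1−b₀)m} z^m/(q)_m`; stated as a
power-series identity in `q` for each fixed `z`-degree `m = n`. -/
theorem rogers_ramanujan_type (b0 : ℕ) (hb0 : b0 ≤ 1) (n : ℕ) :
    (PowerSeries.mk fun d : ℕ =>
      (Set.ncard {a : ℕ →₀ ℕ |
          (∀ i, a i * a (i + 1) = 0) ∧ (∀ i, a i ≤ 1) ∧ a 0 ≤ b0 ∧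
          (a.sum fun _ v => v) = n ∧ (a.sum fun i v => i * v) = d} : ℂ)) =
    (PowerSeries.X : PowerSeries ℂ) ^ (n * (n - 1) + (1 - b0) * n) *
      (∏ j ∈ Finset.range n, (1 - (PowerSeries.X : PowerSeries ℂ) ^ (j + 1)))⁻¹ := by
  have hF : sumGenFun ℂ (sparseSets 0 n) =
      X ^ (n * (n - 1)) * (∏ j ∈ range n, (1 - (X : ℂ⟦X⟧) ^ (j + 1)))⁻¹ := by
    rw [PowerSeries.eq_mul_inv_iff_mul_eq, sumGenFun_sparseSets_zero_mul_prod]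
    simp [map_prod]
  calc _ = sumGenFun ℂ (sparseSets (1 - b0) n) := by
        ext d
        rw [sumGenFun, coeff_mk, coeff_mk, ncard_admissible_eq hb0]
    _ = _ := by
      rw [sumGenFun_sparseSets_eq_X_pow_mul, hF, ← mul_assoc, ← pow_add, mul_comm (1 - b0),
        add_comm]
end

section
/- With sequences α_j^± defined by α_{j,m}^± = (±1)^m ε_j^± and α_j^{±,0} = ε_j^±, and E_a(z) = X_{β_a}(z) where β_a = α_a^+ for 1 ≤ a ≤ l and β_a = α_{k−a+1}^- for l+1 ≤ a ≤ k = 2l, the operator products satisfy: E_a(z)E_b(w) = (z−w)^2 :E_a(z)E_b(w): if a = b; = (z+w) :E_a(z)E_b(w): if a+b = k+1; and = :E_a(z)E_b(w): otherwise. In particular all E_a(z) commute, E_a(z)^2 = 0, and E_a(z)E_{k+1−a}(−z) = 0. -/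
/-!
With `σ_a = ±1` the sign for which `β_{a,m} = σ_a^m β_{a,0}`, the contraction coefficients are
`⟨β_{a,m}, β_{b,−m}⟩ = n r^m` with `r = σ_a σ_b` and `n = ⟨β_{a,0}, β_{b,0}⟩ ∈ {2, 1, 0}` in the
three cases. Hence the contraction series is `exp(−Σ n r^m t^m/m) = exp(n log(1 − r t)) = (1 − r t)^n`,
where `r = 1` if `a = b` and `r = −1` if `a + b = k + 1`, since then `a` and `b` lie on opposite
halves. The exponential identity is checked through the differential equation
`f' = −(Σ_j c_{j+1} t^j) f`, `f(0) = 1`, whose coefficientwise form is the recursion defining `gcoef`.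
-/

noncomputable section

/-- Coefficients of `exp(−Σ_{m≥1} c_m t^m / m)`. -/
def gcoef (c : ℕ → ℂ) : ℕ → ℂ
  | 0 => 1
  | n + 1 => (-(1 : ℂ) / (n + 1)) * ∑ j ∈ Finset.range (n + 1), c (j + 1) * gcoef c (n - j)
decreasing_by exact Nat.lt_succ_of_le (Nat.sub_le n j)

/-- The contraction series `exp(−Σ_{m≥1} c_m t^m / m)` with `t = w/z`; for vertex operators
`g(z,w;α,β) = z^{⟨α_0,β^0⟩} · contrS c (w/z)`, `c m = ⟨α_m, β_{−m}⟩`. -/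
def contrS (c : ℕ → ℂ) : PowerSeries ℂ := PowerSeries.mk (gcoef c)

/-- The sequences `β_a` (for `k = 2l`, `a` zero-based): `β_{a,m} = ε_{a+1}^+` for
`a < l`, and `β_{a,m} = (−1)^m ε_{k−a}^-` for `a ≥ l` (paper indices `α_{k−a+1}^-`). -/
def bseq {V : Type*} [AddCommGroup V] [Module ℂ V] (l : ℕ) (εp εm : Fin l → V)
    (a : Fin (2 * l)) (m : ℤ) : V :=
  if h : (a : ℕ) < l then εp ⟨a, h⟩
  else ((-1 : ℂ) ^ m) • εm ⟨2 * l - 1 - a, by have := a.isLt; omega⟩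

section ContractionSeries

open PowerSeries

theorem eq_contrS_of_derivative {c : ℕ → ℂ} {f : PowerSeries ℂ} (h0 : constantCoeff f = 1)
    (hf : d⁄dX ℂ f = -(mk fun j => c (j + 1)) * f) : f = contrS c := by
  ext n
  induction n using Nat.strong_induction_on with
  | _ n ih =>
    rcases n with _ | n
    · simpa [contrS, gcoef] using h0
    have hcoeff := congrArg (coeff n) hf
    rw [coeff_derivative, neg_mul, map_neg, coeff_mul,
      Finset.Nat.sum_antidiagonal_eq_sum_range_succ_mk] at hcoeff
    simp only [coeff_mk] at hcoeff
    rw [Finset.sum_congr rfl fun j hj => by rw [ih (n - j) (by simp at hj; omega)]] at hcoeff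
    simp only [contrS, coeff_mk] at hcoeff ⊢
    rw [gcoef]
    field_simp
    linear_combination hcoeff

theorem mk_pow_mul_one_sub_C_mul_X {R : Type*} [CommRing R] (r : R) :
    mk (fun j => r ^ j) * (1 - C r * X) = 1 := by
  simpa [rescale_mk, rescale_X] using congrArg (rescale r) (mk_one_mul_one_sub_eq_one R)

theorem contrS_natCast_mul_pow (n : ℕ) (r : ℂ) :
    contrS (fun m => n * r ^ m) = (1 - C r * X) ^ n := by
  refine (eq_contrS_of_derivative (by simp) ?_).symm
  rcases n with _ | n
  · ext; simp
  have hP : mk (fun j => ((n + 1 : ℕ) : ℂ) * r ^ (j + 1)) =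
      C ((n + 1 : ℕ) * r) * mk (fun j => r ^ j) := by
    ext j; rw [coeff_C_mul, coeff_mk, coeff_mk]; ring
  rw [derivative_pow, hP, Nat.add_sub_cancel]
  simp only [map_sub, derivative_one, Derivation.leibniz, derivative_C, derivative_X, smul_eq_mul,
    map_mul, map_natCast]
  linear_combination ((n + 1 : ℕ) * C r * (1 - C r * X) ^ n) * mk_pow_mul_one_sub_C_mul_X r

end ContractionSeries

section BetaSequences

variable {V : Type*} [AddCommGroup V] [Module ℂ V] {l : ℕ} (εp εm : Fin l → V)

def bseqSign (l : ℕ) (a : Fin (2 * l)) : ℂ := if (a : ℕ) < l then 1 else -1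

theorem bseqSign_mul_self (a : Fin (2 * l)) : bseqSign l a * bseqSign l a = 1 := by
  unfold bseqSign; split_ifs <;> norm_num

theorem bseqSign_zpow_neg (a : Fin (2 * l)) (m : ℤ) : bseqSign l a ^ (-m) = bseqSign l a ^ m := by
  rw [zpow_neg, ← inv_zpow, inv_eq_of_mul_eq_one_left (bseqSign_mul_self a)]

theorem bseqSign_mul_of_add_eq {a b : Fin (2 * l)} (h : (a : ℕ) + b = 2 * l - 1) :
    bseqSign l a * bseqSign l b = -1 := by
  have := a.isLt
  unfold bseqSign; split_ifs <;> norm_num <;> omega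

theorem bseq_eq_zpow_smul (a : Fin (2 * l)) (m : ℤ) :
    bseq l εp εm a m = bseqSign l a ^ m • bseq l εp εm a 0 := by
  unfold bseq bseqSign; split_ifs <;> simp

theorem pairing_bseq_neg (B : V →ₗ[ℂ] V →ₗ[ℂ] ℂ) (a b : Fin (2 * l)) (m : ℤ) :
    B (bseq l εp εm a m) (bseq l εp εm b (-m)) =
      (bseqSign l a * bseqSign l b) ^ m * B (bseq l εp εm a 0) (bseq l εp εm b 0) := by
  rw [bseq_eq_zpow_smul _ _ a, bseq_eq_zpow_smul _ _ b, bseqSign_zpow_neg]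
  simp only [map_smul, LinearMap.smul_apply, smul_eq_mul, mul_zpow]
  ring

theorem pairing_bseq_zero (B : V →ₗ[ℂ] V →ₗ[ℂ] ℂ) (hBsymm : ∀ v w, B v w = B w v)
    (hpp : ∀ a b, B (εp a) (εp b) = if a = b then 2 else 0)
    (hmm : ∀ a b, B (εm a) (εm b) = if a = b then 2 else 0)
    (hpm : ∀ a b, B (εp a) (εm b) = if a = b then 1 else 0) (a b : Fin (2 * l)) :
    B (bseq l εp εm a 0) (bseq l εp εm b 0) =
      if a = b then 2 else if (a : ℕ) + (b : ℕ) = 2 * l - 1 then 1 else 0 := by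
  have hmp : ∀ a b, B (εm a) (εp b) = if b = a then 1 else 0 := fun a b => by
    rw [hBsymm, hpm]
  have := a.isLt; have := b.isLt
  unfold bseq
  split_ifs <;> simp_all [Fin.ext_iff] <;> omega

end BetaSequences

theorem vertex_ope_even_k_general (l : ℕ) (V : Type*) [AddCommGroup V] [Module ℂ V]
    (B : V →ₗ[ℂ] V →ₗ[ℂ] ℂ) (hBsymm : ∀ v w, B v w = B w v)
    (εp εm : Fin l → V)
    (hpp : ∀ a b, B (εp a) (εp b) = if a = b then 2 else 0)
    (hmm : ∀ a b, B (εm a) (εm b) = if a = b then 2 else 0)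
    (hpm : ∀ a b, B (εp a) (εm b) = if a = b then 1 else 0)
    (a b : Fin (2 * l)) :
    B (bseq l εp εm a 0) (bseq l εp εm b 0) =
      (if a = b then 2 else if (a : ℕ) + (b : ℕ) = 2 * l - 1 then 1 else 0 : ℂ) ∧
    contrS (fun m => B (bseq l εp εm a (m : ℤ)) (bseq l εp εm b (-(m : ℤ)))) =
      (if a = b then (1 - PowerSeries.X : PowerSeries ℂ) ^ 2
       else if (a : ℕ) + (b : ℕ) = 2 * l - 1 then 1 + PowerSeries.X
       else 1) := by
  have hzero := pairing_bseq_zero εp εm B hBsymm hpp hmm hpm a b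
  refine ⟨hzero, ?_⟩
  simp only [pairing_bseq_neg, hzero, zpow_natCast]
  split_ifs with hab hsum
  · subst hab
    simpa [bseqSign_mul_self, mul_comm] using contrS_natCast_mul_pow 2 1
  · simpa [bseqSign_mul_of_add_eq hsum, mul_comm, sub_eq_add_neg] using
      contrS_natCast_mul_pow 1 (-1)
  · simpa using contrS_natCast_mul_pow 0 (bseqSign l a * bseqSign l b)

/-- With `α_{j,m}^± = (±1)^m ε_j^±`, `E_a(z) = X_{β_a}(z)` where
`β_a = α_a^+` for `a ≤ l` and `β_a = α_{k−a+1}^-` for `a > l` (`k = 2l`), the operator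
products satisfy `E_a(z)E_b(w) = (z−w)^2 :E_aE_b:` if `a = b`, `= (z+w) :E_aE_b:` if
`a + b = k+1`, and `= :E_aE_b:` otherwise: the `z`-exponent `⟨β_{a,0}, β_b^0⟩` and the
contraction series `exp(−Σ ⟨β_{a,m}, β_{b,−m}⟩ t^m/m)` equal `(2, (1−t)^2)`,
`(1, 1+t)`, `(0, 1)` respectively in the three cases.  (In particular all `E_a(z)`
commute, `E_a(z)^2 = 0` and `E_a(z)E_{k+1−a}(−z) = 0`.) -/
theorem vertex_ope_even_k (l : ℕ) (hl : 0 < l) (V : Type*) [AddCommGroup V] [Module ℂ V]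
    (B : V →ₗ[ℂ] V →ₗ[ℂ] ℂ) (hBsymm : ∀ v w, B v w = B w v)
    (εp εm : Fin l → V)
    (hpp : ∀ a b, B (εp a) (εp b) = if a = b then 2 else 0)
    (hmm : ∀ a b, B (εm a) (εm b) = if a = b then 2 else 0)
    (hpm : ∀ a b, B (εp a) (εm b) = if a = b then 1 else 0)
    (a b : Fin (2 * l)) :
    B (bseq l εp εm a 0) (bseq l εp εm b 0) =
      (if a = b then 2 else if (a : ℕ) + (b : ℕ) = 2 * l - 1 then 1 else 0 : ℂ) ∧
    contrS (fun m => B (bseq l εp εm a (m : ℤ)) (bseq l εp εm b (-(m : ℤ)))) =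
      (if a = b then (1 - PowerSeries.X : PowerSeries ℂ) ^ 2
       else if (a : ℕ) + (b : ℕ) = 2 * l - 1 then 1 + PowerSeries.X
       else 1) :=
  vertex_ope_even_k_general l V B hBsymm εp εm hpp hmm hpm a b
end
end

section
/- Let F ∈ ℂ[x_1,...,x_n]^{S_n} be a symmetric polynomial that vanishes whenever x_1 = ··· = x_a = −x_{a+1} = ··· = −x_{k+1} for every 0 ≤ a ≤ k+1 (i.e., whenever a variables equal t and k+1−a variables equal −t for a common value t). Then for a partition λ of n with parts ≤ k, the evaluation φ_λ(F) (substituting blocks of variables by x_i^{(a)} with multiplicity a) is divisible by ∏_{a<b, a+b>k} ∏_{i,j} (x_i^{(a)} + x_j^{(b)})^{a+b−k} · ∏_{a > k/2} ∏_{i<j} (x_i^{(a)} + x_j^{(a)})^{2a−k}, provided F vanishes under φ_ν for all ν ≻ λ. -/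
/-!
Write `|p| = p.1 + 1` for the size of block `p`. The factors `X p + X q` attached to distinct
blocks are pairwise non-associated primes, so it suffices to show that each power
`(X p + X q) ^ (|p| + |q| - k)` divides `φ_λ(F)`. Keep the `|q|` variables of block `q` free and
set the variables of every other block to that block's variable. By symmetry and the vanishing
hypothesis the result vanishes as soon as `k + 1 - |p|` of the free variables equal `-X p`, since
block `p` supplies `|p|` variables equal to `X p`. After translating by `X p`, every monomial
therefore involves at least `|p| + |q| - k` of the free variables, and setting all of them equal
to `X q` produces the factor `(X q + X p) ^ (|p| + |q| - k)`.
-/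

open MvPolynomial

/-- The list of parts (in decreasing order) of the partition whose part `a+1` occurs
with multiplicity `m a`. -/
def partsOf {k : ℕ} (m : Fin k → ℕ) : List ℕ :=
  (((List.finRange k).reverse).map fun a => List.replicate (m a) ((a : ℕ) + 1)).flatten

/-- `b` groups the `n` variables into blocks: for each block index `p = (a, i)`,
exactly `a+1` of the variables are sent to `p`. -/
def IsBlockMap {k n : ℕ} (m : Fin k → ℕ) (b : Fin n → (a : Fin k) × Fin (m a)) : Prop :=
  ∀ p : (a : Fin k) × Fin (m a),
    (Finset.univ.filter fun i => b i = p).card = (p.1 : ℕ) + 1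

/-- A linear order on block indices, to enumerate each unordered pair once. -/
def pairLT {k : ℕ} {m : Fin k → ℕ} (p q : (a : Fin k) × Fin (m a)) : Prop :=
  (p.1 : ℕ) < (q.1 : ℕ) ∨ ((p.1 : ℕ) = (q.1 : ℕ) ∧ (p.2 : ℕ) < (q.2 : ℕ))

instance {k : ℕ} {m : Fin k → ℕ} (p q : (a : Fin k) × Fin (m a)) : Decidable (pairLT p q) := by
  unfold pairLT; infer_instance

open Finset

namespace MvPolynomial

variable {σ R : Type*}

theorem irreducible_X_add_X [CommRing R] [IsDomain R] {i j : σ} (h : i ≠ j) :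
    Irreducible (X i + X j : MvPolynomial σ R) := by
  classical
  have hcoeff : coeff (Finsupp.single i 1) (X i + X j : MvPolynomial σ R) = 1 := by
    simp [coeff_X, h.symm, Finsupp.single_left_inj]
  refine irreducible_of_totalDegree_eq_one (le_antisymm ?_ ?_) fun r hr => ?_
  · exact (totalDegree_add _ _).trans (by simp)
  · simpa using le_totalDegree (s := Finsupp.single i 1) (by simp [mem_support_iff, hcoeff])
  · exact isUnit_of_dvd_one (hcoeff ▸ hr _)

theorem eq_or_eq_of_X_add_X_dvd [CommSemiring R] [Nontrivial R] {i j k l : σ} (hkl : k ≠ l)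
    (h : (X i + X j : MvPolynomial σ R) ∣ X k + X l) : k = i ∨ k = j := by
  classical
  by_contra! hk
  have := map_dvd (eval fun t => if t = k then (1 : R) else 0) h
  simp [hk.1.symm, hk.2.symm, hkl.symm] at this

theorem isRelPrime_X_add_X [CommRing R] [IsDomain R] {i j k l : σ} (hij : i ≠ j) (hkl : k ≠ l)
    (h : ¬ (k = i ∧ l = j)) (h' : ¬ (k = j ∧ l = i)) :
    IsRelPrime (X i + X j : MvPolynomial σ R) (X k + X l) := by
  refine (irreducible_X_add_X hij).isRelPrime_iff_not_dvd.2 fun hdvd => ?_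
  have hk := eq_or_eq_of_X_add_X_dvd hkl hdvd
  have hl := eq_or_eq_of_X_add_X_dvd hkl.symm (add_comm (X k : MvPolynomial σ R) (X l) ▸ hdvd)
  rcases hk with rfl | rfl <;> rcases hl with rfl | rfl <;> simp_all

section Multiplicity

variable {τ : Type*} [CommRing R] [DecidableEq τ]

theorem mem_ideal_span_X_image_of_aeval_eq_zero {S : Finset τ} {F : MvPolynomial τ R}
    (h : aeval (fun t => if t ∈ S then 0 else (X t : MvPolynomial τ R)) F = 0) :
    F ∈ Ideal.span (X '' (S : Set τ)) := by
  set I := Ideal.span (X '' (S : Set τ) : Set (MvPolynomial τ R))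
  have hmod : (Ideal.Quotient.mkₐ R I).comp
      (aeval fun t => if t ∈ S then 0 else (X t : MvPolynomial τ R)) = Ideal.Quotient.mkₐ R I := by
    refine algHom_ext fun t => ?_
    by_cases ht : t ∈ S
    · simpa [ht, eq_comm (a := (0 : MvPolynomial τ R ⧸ I)), Ideal.Quotient.eq_zero_iff_mem]
        using Ideal.subset_span (Set.mem_image_of_mem X ht)
    · simp [ht]
  have := AlgHom.congr_fun hmod F
  rw [AlgHom.comp_apply, h, map_zero, eq_comm] at this
  exact Ideal.Quotient.eq_zero_iff_mem.1 this

theorem card_lt_card_inter_support_add {B : Finset τ} {s : ℕ} {F : MvPolynomial τ R}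
    (h : ∀ S ⊆ B, #S = s → aeval (fun t => if t ∈ S then 0 else (X t : MvPolynomial τ R)) F = 0)
    {d : τ →₀ ℕ} (hd : d ∈ F.support) : #B < #(B ∩ d.support) + s := by
  by_contra! hlt
  have hs : s ≤ #(B \ d.support) := by
    have := card_sdiff_add_card_inter B d.support
    omega
  obtain ⟨S, hSB, hS⟩ := exists_subset_card_eq hs
  obtain ⟨t, ht, hdt⟩ := mem_ideal_span_X_image.1
    (mem_ideal_span_X_image_of_aeval_eq_zero (h S (hSB.trans sdiff_subset) hS)) d hd
  exact (mem_sdiff.1 (hSB ht)).2 (Finsupp.mem_support_iff.2 hdt)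

theorem pow_dvd_aeval_ite_of_le_card_inter_support {A : Type*} [CommRing A] [Algebra R A]
    {B : Finset τ} {e : ℕ} {F : MvPolynomial τ R} (h : ∀ d ∈ F.support, e ≤ #(B ∩ d.support))
    (z : A) (w : τ → A) : z ^ e ∣ aeval (fun t => if t ∈ B then z else w t) F := by
  rw [F.as_sum, map_sum]
  refine dvd_sum fun d hd => ?_
  rw [aeval_monomial, Finsupp.prod]
  refine Dvd.dvd.mul_left ?_ _
  calc z ^ e ∣ z ^ #(B ∩ d.support) := pow_dvd_pow z (h d hd)
    _ = ∏ t ∈ B ∩ d.support, z := (prod_const z).symm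
    _ ∣ ∏ t ∈ B ∩ d.support, (if t ∈ B then z else w t) ^ d t :=
        prod_dvd_prod_of_dvd _ _ fun t ht => by
          rw [if_pos (mem_inter.1 ht).1]
          exact dvd_pow_self z (Finsupp.mem_support_iff.1 (mem_inter.1 ht).2)
    _ ∣ ∏ t ∈ d.support, (if t ∈ B then z else w t) ^ d t :=
        prod_dvd_prod_of_subset _ _ _ inter_subset_right

theorem sub_pow_dvd_aeval_ite {A : Type*} [CommRing A] [Algebra R A] {B : Finset τ} {s : ℕ}
    (hs : s ≤ #B) {c : R} {F : MvPolynomial τ R}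
    (h : ∀ S ⊆ B, #S = s → aeval (fun t => if t ∈ S then C c else X t) F = 0)
    (y : A) (w : τ → A) :
    (y - algebraMap R A c) ^ (#B - s + 1) ∣ aeval (fun t => if t ∈ B then y else w t) F := by
  -- translate the variables in `B` by `c`, reducing to the case `c = 0`
  set shift : τ → MvPolynomial τ R := fun t => if t ∈ B then X t + C c else X t
  have hF' : ∀ S ⊆ B, #S = s →
      aeval (fun t => if t ∈ S then 0 else (X t : MvPolynomial τ R)) (aeval shift F) = 0 := by
    intro S hSB hS
    calc aeval (fun t => if t ∈ S then 0 else (X t : MvPolynomial τ R)) (aeval shift F)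
        = aeval shift (aeval (fun t => if t ∈ S then C c else (X t : MvPolynomial τ R)) F) := by
          simp only [comp_aeval_apply]
          refine congrArg (fun v : τ → MvPolynomial τ R => aeval v F) (_root_.funext fun t => ?_)
          by_cases htS : t ∈ S
          · simp [shift, htS, hSB htS]
          · by_cases htB : t ∈ B <;> simp [shift, htS, htB]
      _ = 0 := by rw [h S hSB hS, map_zero]
  have hdvd := pow_dvd_aeval_ite_of_le_card_inter_support (B := B) (e := #B - s + 1)
    (fun d hd => by have := card_lt_card_inter_support_add hF' hd; omega)
    (y - algebraMap R A c) w
  convert hdvd using 1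
  rw [comp_aeval_apply]
  refine congrArg (fun v : τ → A => aeval v F) (_root_.funext fun t => ?_)
  by_cases htB : t ∈ B <;> simp [shift, htB]

end Multiplicity

end MvPolynomial

theorem Fin.exists_perm_mem_of_disjoint {n : ℕ} {P S : Finset (Fin n)} (h : Disjoint P S) :
    ∃ π : Equiv.Perm (Fin n), ∀ i : Fin n,
      ((i : ℕ) < #P → π i ∈ P) ∧ (#P ≤ (i : ℕ) → (i : ℕ) < #P + #S → π i ∈ S) := by
  have hle : #P + #S ≤ n := by
    simpa [card_union_of_disjoint h] using card_le_univ (P ∪ S)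
  have hinj : Function.Injective (Fin.append (P.orderEmbOfFin rfl) (S.orderEmbOfFin rfl)) :=
    Fin.append_injective_iff.2 ⟨(P.orderEmbOfFin rfl).injective, (S.orderEmbOfFin rfl).injective,
      fun i j hij => disjoint_left.1 h (P.orderEmbOfFin_mem rfl i)
        (hij ▸ S.orderEmbOfFin_mem rfl j)⟩
  obtain ⟨π, hπ⟩ := Equiv.Perm.exists_extending_pair _ _ (Fin.castLE_injective hle) hinj
  refine ⟨π, fun i => ⟨fun hi => ?_, fun hi hi' => ?_⟩⟩
  · rw [show i = Fin.castLE hle (Fin.castAdd #S ⟨i, hi⟩) from Fin.ext rfl, hπ, Fin.append_left]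
    exact P.orderEmbOfFin_mem rfl _
  · rw [show i = Fin.castLE hle (Fin.natAdd #P ⟨i - #P, by omega⟩) from Fin.ext (by simp; omega),
      hπ, Fin.append_right]
    exact S.orderEmbOfFin_mem rfl _

namespace MvPolynomial

theorem IsSymmetric.aeval_eq_zero_of_eq_neg {R A : Type*} [CommRing R] [CommRing A] [Algebra R A]
    {n a l : ℕ} {f : MvPolynomial (Fin n) R} (hf : f.IsSymmetric)
    (hvan : aeval (fun i : Fin n =>
        if (i : ℕ) < a then (X (Sum.inl ()) : MvPolynomial (Unit ⊕ Fin n) R)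
        else if (i : ℕ) < l then - X (Sum.inl ())
        else X (Sum.inr i)) f = 0)
    {P S : Finset (Fin n)} (hPS : Disjoint P S) (hP : #P = a) (hS : #S = l - a)
    {v : Fin n → A} {c : A} (hvP : ∀ i ∈ P, v i = c) (hvS : ∀ i ∈ S, v i = -c) :
    aeval v f = 0 := by
  obtain ⟨π, hπ⟩ := Fin.exists_perm_mem_of_disjoint hPS
  calc aeval v f = aeval (v ∘ π) f := by rw [← aeval_rename, hf π]
    _ = aeval (Sum.elim (fun _ => c) (v ∘ π)) (aeval (fun i : Fin n =>
        if (i : ℕ) < a then (X (Sum.inl ()) : MvPolynomial (Unit ⊕ Fin n) R)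
        else if (i : ℕ) < l then - X (Sum.inl ())
        else X (Sum.inr i)) f) := by
      rw [comp_aeval_apply]
      refine congrArg (fun u : Fin n → A => aeval u f) (_root_.funext fun i => ?_)
      by_cases h₁ : (i : ℕ) < a
      · simp [h₁, hvP _ ((hπ i).1 (hP ▸ h₁))]
      by_cases h₂ : (i : ℕ) < l
      · simp [h₁, h₂, hvS _ ((hπ i).2 (by omega) (by omega))]
      · simp [h₁, h₂]
    _ = 0 := by rw [hvan, map_zero]

end MvPolynomial

section Blocks

variable {k n : ℕ} {m : Fin k → ℕ}

theorem ne_of_pairLT {p q : (a : Fin k) × Fin (m a)} (h : pairLT p q) : p ≠ q := by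
  rintro rfl
  rcases h with h | ⟨-, h⟩ <;> exact lt_irrefl _ h

theorem pairLT_asymm {p q : (a : Fin k) × Fin (m a)} (h : pairLT p q) : ¬ pairLT q p := by
  rcases h with h | ⟨e, h⟩ <;> rintro (h' | ⟨e', h'⟩) <;> omega

theorem IsBlockMap.add_le {b : Fin n → (a : Fin k) × Fin (m a)} (hb : IsBlockMap m b)
    {p q : (a : Fin k) × Fin (m a)} (hpq : p ≠ q) : (p.1 : ℕ) + 1 + ((q.1 : ℕ) + 1) ≤ n := by
  have hdisj : Disjoint (univ.filter fun i => b i = p) (univ.filter fun i => b i = q) :=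
    disjoint_filter.2 fun i _ hp hq => hpq (hp.symm.trans hq)
  have := card_le_univ ((univ.filter fun i => b i = p) ∪ univ.filter fun i => b i = q)
  rwa [card_union_of_disjoint hdisj, hb p, hb q, Fintype.card_fin] at this

theorem X_add_X_pow_dvd_aeval_of_isBlockMap {R : Type*} [CommRing R] {f : MvPolynomial (Fin n) R}
    (hsym : f.IsSymmetric)
    (hvan : ∀ a : ℕ, a ≤ k + 1 → k + 1 ≤ n →
      aeval (fun i : Fin n =>
        if (i : ℕ) < a then (X (Sum.inl ()) : MvPolynomial (Unit ⊕ Fin n) R)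
        else if (i : ℕ) < k + 1 then - X (Sum.inl ())
        else X (Sum.inr i)) f = 0)
    {b : Fin n → (a : Fin k) × Fin (m a)} (hb : IsBlockMap m b)
    {p q : (a : Fin k) × Fin (m a)} (hpq : p ≠ q) :
    (X p + X q : MvPolynomial ((a : Fin k) × Fin (m a)) R) ^ ((p.1 : ℕ) + (q.1 : ℕ) + 2 - k)
      ∣ aeval (fun i => X (b i)) f := by
  obtain hle | hlt := le_or_gt ((p.1 : ℕ) + (q.1 : ℕ) + 2) k
  · simp [Nat.sub_eq_zero_of_le hle]
  have hn := hb.add_le hpq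
  set Pb := univ.filter fun i => b i = p
  set Qb := univ.filter fun i => b i = q
  have hPQ : Disjoint Pb Qb := disjoint_filter.2 fun i _ hp hq => hpq (hp.symm.trans hq)
  set F : MvPolynomial (Fin n) (MvPolynomial ((a : Fin k) × Fin (m a)) R) :=
    aeval (fun i => if i ∈ Qb then X i else C (X (b i))) f
  have hF : ∀ S ⊆ Qb, #S = k + 1 - ((p.1 : ℕ) + 1) →
      aeval (fun t => if t ∈ S then C (-X p : MvPolynomial _ R) else X t) F = 0 := by
    intro S hSQ hS
    rw [← AlgHom.coe_restrictScalars' R, comp_aeval_apply]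
    refine hsym.aeval_eq_zero_of_eq_neg (hvan _ (by omega) (by omega)) (hPQ.mono_right hSQ)
      (hb p) hS (c := C (X p)) (fun i hi => ?_) (fun i hi => ?_)
    · simp [disjoint_left.1 hPQ hi, (mem_filter.1 hi).2]
    · simp [hSQ hi, hi]
  have hdvd := sub_pow_dvd_aeval_ite (A := MvPolynomial ((a : Fin k) × Fin (m a)) R)
    (by rw [hb q]; omega) hF (X q) (fun i => X (b i))
  have hexp : #Qb - (k + 1 - ((p.1 : ℕ) + 1)) + 1 = (p.1 : ℕ) + (q.1 : ℕ) + 2 - k := by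
    rw [hb q]; omega
  have heval : aeval (fun t => if t ∈ Qb then (X q : MvPolynomial _ R) else X (b t)) F =
      aeval (fun i => X (b i)) f := by
    rw [← AlgHom.coe_restrictScalars' R, comp_aeval_apply]
    refine congrArg (fun u => aeval u f) (funext fun i => ?_)
    by_cases hi : i ∈ Qb
    · simp [hi, (mem_filter.1 hi).2]
    · simp [hi]
  rwa [hexp, heval, Algebra.algebraMap_self, RingHom.id_apply, sub_neg_eq_add, add_comm] at hdvd

end Blocks

theorem gordon_divisibility_k3_plus_general (k n : ℕ) (f : MvPolynomial (Fin n) ℂ)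
    (hsym : f.IsSymmetric)
    (hvan : ∀ a : ℕ, a ≤ k + 1 → k + 1 ≤ n →
      aeval (fun i : Fin n =>
        if (i : ℕ) < a then (X (Sum.inl ()) : MvPolynomial (Unit ⊕ Fin n) ℂ)
        else if (i : ℕ) < k + 1 then - X (Sum.inl ())
        else X (Sum.inr i)) f = 0)
    (m : Fin k → ℕ)
    (b : Fin n → (a : Fin k) × Fin (m a)) (hb : IsBlockMap m b) :
    ((∏ pq ∈ Finset.univ.filter
        (fun pq : ((a : Fin k) × Fin (m a)) × ((a : Fin k) × Fin (m a)) =>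
          pairLT pq.1 pq.2),
        (X pq.1 + X pq.2) ^ (((pq.1.1 : ℕ) + (pq.2.1 : ℕ) + 2) - k)) :
        MvPolynomial ((a : Fin k) × Fin (m a)) ℂ)
      ∣ aeval (fun i => X (b i)) f := by
  refine prod_dvd_of_isRelPrime ?_ fun pq hpq =>
    X_add_X_pow_dvd_aeval_of_isBlockMap hsym hvan hb (ne_of_pairLT (mem_filter.1 hpq).2)
  rintro ⟨p, q⟩ hpq ⟨p', q'⟩ hpq' hne
  simp only [coe_filter, mem_univ, true_and, Set.mem_ofPred_eq] at hpq hpq'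
  refine (isRelPrime_X_add_X (ne_of_pairLT hpq) (ne_of_pairLT hpq') ?_ ?_).pow
  · rintro ⟨rfl, rfl⟩
    exact hne rfl
  · rintro ⟨rfl, rfl⟩
    exact pairLT_asymm hpq hpq'

/-- Let `F` be a symmetric polynomial in `n` variables over `ℂ` that
vanishes whenever `a` of its variables equal `t` and `k+1−a` variables equal `−t` for a
common value `t` (for every `0 ≤ a ≤ k+1`).  Then for a partition `λ` of `n` with parts
`≤ k`, if `F` vanishes under `φ_ν` for all `ν ≻ λ`, the block evaluation `φ_λ(F)` is
divisible by `∏_{a<b, a+b>k} ∏_{i,j} (x_i^{(a)} + x_j^{(b)})^{a+b−k} ·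
∏_{a>k/2} ∏_{i<j} (x_i^{(a)} + x_j^{(a)})^{2a−k}` (each unordered pair of distinct
variables in blocks of sizes `a, b` contributing `(x + y)^{(a+b−k)₊}`). -/
theorem gordon_divisibility_k3_plus (k n : ℕ) (f : MvPolynomial (Fin n) ℂ)
    (hsym : f.IsSymmetric)
    (hvan : ∀ a : ℕ, a ≤ k + 1 → k + 1 ≤ n →
      aeval (fun i : Fin n =>
        if (i : ℕ) < a then (X (Sum.inl ()) : MvPolynomial (Unit ⊕ Fin n) ℂ)
        else if (i : ℕ) < k + 1 then - X (Sum.inl ())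
        else X (Sum.inr i)) f = 0)
    (m : Fin k → ℕ) (hm : ∑ a : Fin k, ((a : ℕ) + 1) * m a = n)
    (b : Fin n → (a : Fin k) × Fin (m a)) (hb : IsBlockMap m b)
    (hlex : ∀ m' : Fin k → ℕ, (∑ a : Fin k, ((a : ℕ) + 1) * m' a = n) →
      List.Lex (· < ·) (partsOf m) (partsOf m') →
      ∀ b' : Fin n → (a : Fin k) × Fin (m' a), IsBlockMap m' b' →
        aeval (fun i => X (b' i)) f = (0 : MvPolynomial ((a : Fin k) × Fin (m' a)) ℂ)) :
    ((∏ pq ∈ Finset.univ.filter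
        (fun pq : ((a : Fin k) × Fin (m a)) × ((a : Fin k) × Fin (m a)) =>
          pairLT pq.1 pq.2),
        (X pq.1 + X pq.2) ^ (((pq.1.1 : ℕ) + (pq.2.1 : ℕ) + 2) - k)) :
        MvPolynomial ((a : Fin k) × Fin (m a)) ℂ)
      ∣ aeval (fun i => X (b i)) f :=
  gordon_divisibility_k3_plus_general k n f hsym hvan m b hb
end

section
/- For k = 1, the character of (1,3)-admissible configurations with a_0 ≤ 1, i.e. Σ over sequences (a_i) with a_i ∈ {0,1} and a_i + a_{i+1} + a_{i+2} ≤ 1 of q^{Σ j a_j} z^{Σ a_j}, equals Σ_{m≥0} q^{(1/2)(3m² − 3m)} z^m / (q)_m. -/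
open Finset PowerSeries

def ffpos (n : ℕ) (l : ℕ →₀ ℕ) (j : ℕ) : ℕ :=
  3 * j + ∑ m ∈ Finset.Ico (n - 1 - j) n, l m / (m + 1)

noncomputable def ffPhi (n : ℕ) (l : ℕ →₀ ℕ) : ℕ →₀ ℕ :=
  ∑ j ∈ Finset.range n, Finsupp.single (ffpos n l j) 1

lemma ffpos_succ_ge (n : ℕ) (l : ℕ →₀ ℕ) (j : ℕ) :
    ffpos n l j + 3 ≤ ffpos n l (j + 1) := by
  unfold ffpos
  have h : ∑ m ∈ Finset.Ico (n - 1 - j) n, l m / (m + 1) ≤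
      ∑ m ∈ Finset.Ico (n - 1 - (j + 1)) n, l m / (m + 1) :=
    Finset.sum_le_sum_of_subset (Finset.Ico_subset_Ico (by omega) le_rfl)
  omega

lemma ffpos_gap (n : ℕ) (l : ℕ →₀ ℕ) {j j' : ℕ} (h : j < j') :
    ffpos n l j + 3 ≤ ffpos n l j' := by
  induction j' with
  | zero => omega
  | succ t ih =>
    rcases Nat.lt_or_ge j t with h2 | h2
    · have := ffpos_succ_ge n l t
      have := ih h2
      omega
    · have : j = t := by omega
      subst this
      exact ffpos_succ_ge n l j

lemma ffpos_strictMono (n : ℕ) (l : ℕ →₀ ℕ) : StrictMono (ffpos n l) := by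
  intro j j' h
  have := ffpos_gap n l h
  omega

lemma ffpos_succ (n : ℕ) (l : ℕ →₀ ℕ) {j : ℕ} (h : j < n - 1) :
    ffpos n l (j + 1) = ffpos n l j + 3 + l (n - 2 - j) / (n - 1 - j) := by
  unfold ffpos
  have h1 : n - 1 - (j + 1) = n - 2 - j := by omega
  have h2 : Finset.Ico (n - 2 - j) n = insert (n - 2 - j) (Finset.Ico (n - 1 - j) n) := by
    ext x
    simp only [Finset.mem_Ico, Finset.mem_insert]
    omega
  rw [h1, h2, Finset.sum_insert (by simp; omega)]
  have h3 : n - 2 - j + 1 = n - 1 - j := by omega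
  rw [h3]
  ring

lemma ffpos_zero (n : ℕ) (l : ℕ →₀ ℕ) (h : 0 < n) :
    ffpos n l 0 = l (n - 1) / n := by
  unfold ffpos
  have h2 : Finset.Ico (n - 1 - 0) n = {n - 1} := by
    ext x
    simp only [Finset.mem_Ico, Finset.mem_singleton]
    omega
  rw [h2, Finset.sum_singleton]
  have : n - 1 + 1 = n := by omega
  rw [this, mul_zero, zero_add]

lemma ffPhi_apply (n : ℕ) (l : ℕ →₀ ℕ) (i : ℕ) :
    ffPhi n l i = ((Finset.range n).filter (fun j => ffpos n l j = i)).card := by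
  classical
  rw [ffPhi, Finsupp.finset_sum_apply, Finset.card_filter]
  refine Finset.sum_congr rfl fun j _ => ?_
  rw [Finsupp.single_apply]

lemma ffPhi_cond (n : ℕ) (l : ℕ →₀ ℕ) (i : ℕ) :
    ffPhi n l i + ffPhi n l (i + 1) + ffPhi n l (i + 2) ≤ 1 := by
  classical
  simp only [ffPhi_apply]
  set W := (Finset.range n).filter (fun j => i ≤ ffpos n l j ∧ ffpos n l j ≤ i + 2) with hW
  have hcard : W.card ≤ 1 := by
    rw [Finset.card_le_one]
    intro a ha b hb
    simp only [hW, Finset.mem_filter] at ha hb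
    by_contra hne
    rcases Nat.lt_or_ge a b with h | h
    · have := ffpos_gap n l h; omega
    · have h2 : b < a := by omega
      have := ffpos_gap n l h2; omega
  have hsub : ∀ t, i ≤ t → t ≤ i + 2 →
      (Finset.range n).filter (fun j => ffpos n l j = t) ⊆ W := by
    intro t h1 h2
    intro j hj
    rw [Finset.mem_filter] at hj
    rw [hW, Finset.mem_filter]
    exact ⟨hj.1, by omega, by omega⟩
  have hd1 : Disjoint ((Finset.range n).filter (fun j => ffpos n l j = i))
      ((Finset.range n).filter (fun j => ffpos n l j = i + 1)) := by
    rw [Finset.disjoint_left]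
    intro j hj hj'
    simp only [Finset.mem_filter] at hj hj'
    omega
  have hd2 : Disjoint (((Finset.range n).filter (fun j => ffpos n l j = i)) ∪
      ((Finset.range n).filter (fun j => ffpos n l j = i + 1)))
      ((Finset.range n).filter (fun j => ffpos n l j = i + 2)) := by
    rw [Finset.disjoint_left]
    intro j hj hj'
    simp only [Finset.mem_union, Finset.mem_filter] at hj hj'
    omega
  calc ((Finset.range n).filter (fun j => ffpos n l j = i)).card +
        ((Finset.range n).filter (fun j => ffpos n l j = i + 1)).card +
        ((Finset.range n).filter (fun j => ffpos n l j = i + 2)).card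
      = ((((Finset.range n).filter (fun j => ffpos n l j = i)) ∪
          ((Finset.range n).filter (fun j => ffpos n l j = i + 1))) ∪
          ((Finset.range n).filter (fun j => ffpos n l j = i + 2))).card := by
        rw [Finset.card_union_of_disjoint hd2, Finset.card_union_of_disjoint hd1]
    _ ≤ W.card := Finset.card_le_card (by
        apply Finset.union_subset (Finset.union_subset ?_ ?_) ?_
        · exact hsub i le_rfl (by omega)
        · exact hsub (i+1) (by omega) (by omega)
        · exact hsub (i+2) (by omega) le_rfl)
    _ ≤ 1 := hcard

lemma ffPhi_sum (n : ℕ) (l : ℕ →₀ ℕ) : (ffPhi n l).sum (fun _ v => v) = n := by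
  rw [ffPhi, ← Finsupp.sum_finsetSum_index (fun _ => rfl) (fun _ _ _ => rfl)]
  rw [Finset.sum_congr rfl fun j _ => Finsupp.sum_single_index rfl]
  simp

lemma ffPhi_wsum (n : ℕ) (l : ℕ →₀ ℕ) :
    (ffPhi n l).sum (fun i v => i * v) = ∑ j ∈ Finset.range n, ffpos n l j := by
  rw [ffPhi, ← Finsupp.sum_finsetSum_index (fun _ => mul_zero _) (fun i x y => by ring)]
  refine Finset.sum_congr rfl fun j _ => ?_
  rw [Finsupp.sum_single_index (mul_zero _), mul_one]

/-- weight of the configuration built from `l`. -/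
lemma ffpos_sum (n : ℕ) (l : ℕ →₀ ℕ)
    (hdvd : ∀ m ∈ Finset.range n, (m + 1) ∣ l m) :
    ∑ j ∈ Finset.range n, ffpos n l j =
      3 * Nat.choose n 2 + ∑ m ∈ Finset.range n, l m := by
  unfold ffpos
  rw [Finset.sum_add_distrib, ← Finset.mul_sum]
  have h1 : 3 * ∑ j ∈ Finset.range n, j = 3 * Nat.choose n 2 := by
    have := Finset.sum_range_id_mul_two n
    have h2 : Nat.choose n 2 = n * (n - 1) / 2 := Nat.choose_two_right n
    omega
  rw [h1]
  congr 1
  have h2 : ∀ j, ∑ m ∈ Finset.Ico (n - 1 - j) n, l m / (m + 1) =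
      ∑ m ∈ Finset.range n, if n - 1 - j ≤ m then l m / (m + 1) else 0 := by
    intro j
    rw [← Finset.sum_filter]
    congr 1
    ext x
    simp only [Finset.mem_Ico, Finset.mem_filter, Finset.mem_range]
    omega
  rw [Finset.sum_congr rfl fun j _ => h2 j, Finset.sum_comm]
  refine Finset.sum_congr rfl fun m hm => ?_
  rw [Finset.mem_range] at hm
  have h3 : ∑ j ∈ Finset.range n, (if n - 1 - j ≤ m then l m / (m + 1) else 0) =
      ((Finset.range n).filter (fun j => n - 1 - j ≤ m)).card * (l m / (m + 1)) := by
    rw [← Finset.sum_filter, Finset.sum_const, smul_eq_mul]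
  rw [h3]
  have h4 : (Finset.range n).filter (fun j => n - 1 - j ≤ m) = Finset.Ico (n - 1 - m) n := by
    ext x
    simp only [Finset.mem_filter, Finset.mem_range, Finset.mem_Ico]
    omega
  rw [h4, Nat.card_Ico]
  have h5 : n - (n - 1 - m) = m + 1 := by omega
  rw [h5, Nat.mul_div_cancel' (hdvd m (Finset.mem_range.mpr hm))]

lemma ffPhi_support (n : ℕ) (l : ℕ →₀ ℕ) :
    (ffPhi n l).support = (Finset.range n).image (ffpos n l) := by
  ext i
  rw [Finsupp.mem_support_iff, ffPhi_apply, Finset.mem_image]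
  rw [← Nat.pos_iff_ne_zero, Finset.card_pos, Finset.filter_nonempty_iff]

lemma ffPhi_inj (n : ℕ) {l l' : ℕ →₀ ℕ}
    (hs : l.support ⊆ Finset.range n) (hs' : l'.support ⊆ Finset.range n)
    (hd : ∀ m ∈ Finset.range n, (m + 1) ∣ l m)
    (hd' : ∀ m ∈ Finset.range n, (m + 1) ∣ l' m)
    (h : ffPhi n l = ffPhi n l') : l = l' := by
  -- the positions agree
  have hpos : ∀ j < n, ffpos n l j = ffpos n l' j := by
    intro j hj
    set s := (Finset.range n).image (ffpos n l) with hsdef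
    have hcard : s.card = n := by
      rw [hsdef, Finset.card_image_of_injective _ (ffpos_strictMono n l).injective,
        Finset.card_range]
    have h1 : (fun k : Fin n => ffpos n l k.val) = s.orderEmbOfFin hcard :=
      Finset.orderEmbOfFin_unique hcard
        (fun k => Finset.mem_image.mpr ⟨k.val, Finset.mem_range.mpr k.isLt, rfl⟩)
        (fun a b hab => ffpos_strictMono n l (by exact hab))
    have hs2 : (Finset.range n).image (ffpos n l') = s := by
      rw [hsdef, ← ffPhi_support, ← ffPhi_support, h]
    have h2 : (fun k : Fin n => ffpos n l' k.val) = s.orderEmbOfFin hcard :=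
      Finset.orderEmbOfFin_unique hcard
        (fun k => by
          rw [← hs2]
          exact Finset.mem_image.mpr ⟨k.val, Finset.mem_range.mpr k.isLt, rfl⟩)
        (fun a b hab => ffpos_strictMono n l' (by exact hab))
    have := congrFun (h1.trans h2.symm) ⟨j, hj⟩
    exact this
  ext m
  rcases Nat.lt_or_ge m n with hm | hm
  · have hdm := hd m (Finset.mem_range.mpr hm)
    have hdm' := hd' m (Finset.mem_range.mpr hm)
    have key : l m / (m + 1) = l' m / (m + 1) := by
      rcases Nat.lt_or_ge m (n - 1) with hm1 | hm1
      · -- use ffpos_succ at j = n - 2 - m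
        have hj : n - 2 - m < n - 1 := by omega
        have e1 := ffpos_succ n l hj
        have e2 := ffpos_succ n l' hj
        have hmm : n - 2 - (n - 2 - m) = m := by omega
        have hmm2 : n - 1 - (n - 2 - m) = m + 1 := by omega
        rw [hmm, hmm2] at e1 e2
        have p1 := hpos (n - 2 - m) (by omega)
        have p2 := hpos (n - 2 - m + 1) (by omega)
        omega
      · -- m = n - 1
        have hm2 : m = n - 1 := by omega
        have e1 := ffpos_zero n l (by omega)
        have e2 := ffpos_zero n l' (by omega)
        have p0 := hpos 0 (by omega)
        subst hm2
        have hn : n - 1 + 1 = n := by omega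
        rw [hn] at *
        omega
    calc l m = (m + 1) * (l m / (m + 1)) := (Nat.mul_div_cancel' hdm).symm
      _ = (m + 1) * (l' m / (m + 1)) := by rw [key]
      _ = l' m := Nat.mul_div_cancel' hdm'
  · have h1 : l m = 0 := by
      by_contra hne
      exact absurd (Finset.mem_range.mp (hs (Finsupp.mem_support_iff.mpr hne))) (by omega)
    have h2 : l' m = 0 := by
      by_contra hne
      exact absurd (Finset.mem_range.mp (hs' (Finsupp.mem_support_iff.mpr hne))) (by omega)
    rw [h1, h2]

def ffq (s : Finset ℕ) (n : ℕ) (hc : s.card = n) (j : ℕ) : ℕ :=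
  if h : j < n then s.orderEmbOfFin hc ⟨j, h⟩ else 0

def ffg (s : Finset ℕ) (n : ℕ) (hc : s.card = n) (m : ℕ) : ℕ :=
  if m + 1 = n then ffq s n hc 0
  else if m + 1 < n then ffq s n hc (n - 1 - m) - ffq s n hc (n - 2 - m) - 3 else 0

noncomputable def ffl (s : Finset ℕ) (n : ℕ) (hc : s.card = n) : ℕ →₀ ℕ :=
  Finsupp.onFinset (Finset.range n) (fun m => (m + 1) * ffg s n hc m)
    (fun m hm => by
      rw [Finset.mem_range]
      by_contra h
      apply hm
      have h1 : ¬ (m + 1 = n) := by omega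
      have h2 : ¬ (m + 1 < n) := by omega
      simp [ffg, h1, h2])

lemma ffl_apply (s : Finset ℕ) (n : ℕ) (hc : s.card = n) (m : ℕ) :
    ffl s n hc m = (m + 1) * ffg s n hc m := rfl

lemma ffq_mem (s : Finset ℕ) (n : ℕ) (hc : s.card = n) {j : ℕ} (hj : j < n) :
    ffq s n hc j ∈ s := by
  rw [ffq, dif_pos hj]
  exact Finset.orderEmbOfFin_mem s hc _

lemma ffq_lt (s : Finset ℕ) (n : ℕ) (hc : s.card = n) {j j' : ℕ} (h : j < j') (h' : j' < n) :
    ffq s n hc j < ffq s n hc j' := by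
  rw [ffq, ffq, dif_pos (h.trans h'), dif_pos h']
  exact (s.orderEmbOfFin hc).strictMono (by exact h)

lemma ffPhi_surj (n d : ℕ) (a : ℕ →₀ ℕ)
    (h1 : ∀ i, a i ≤ 1) (h2 : ∀ i, a i + a (i + 1) + a (i + 2) ≤ 1)
    (h3 : a.sum (fun _ v => v) = n) (h4 : a.sum (fun i v => i * v) = d) :
    ∃ l : ℕ →₀ ℕ, l.support ⊆ Finset.range n ∧ (∀ m ∈ Finset.range n, (m + 1) ∣ l m) ∧
      3 * Nat.choose n 2 + ∑ m ∈ Finset.range n, l m = d ∧ ffPhi n l = a := by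
  classical
  set s := a.support with hsdef
  have hval : ∀ x ∈ s, a x = 1 := by
    intro x hx
    have := Finsupp.mem_support_iff.mp hx
    have := h1 x
    omega
  have hcard : s.card = n := by
    rw [Finsupp.sum] at h3
    calc s.card = ∑ x ∈ s, 1 := by rw [Finset.card_eq_sum_ones]
      _ = ∑ x ∈ s, a x := Finset.sum_congr rfl fun x hx => (hval x hx).symm
      _ = n := h3
  have hsep : ∀ x ∈ s, ∀ y ∈ s, x < y → x + 3 ≤ y := by
    intro x hx y hy hxy
    by_contra hcon
    have hy2 : y = x + 1 ∨ y = x + 2 := by omega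
    have hax := hval x hx
    have hay := hval y hy
    have := h2 x
    rcases hy2 with rfl | rfl <;> omega
  set l := ffl s n hcard with hldef
  have hdvd : ∀ m ∈ Finset.range n, (m + 1) ∣ l m := fun m _ => Dvd.intro _ rfl
  have hlv : ∀ m, l m / (m + 1) = ffg s n hcard m := fun m => by
    rw [hldef, ffl_apply, Nat.mul_div_cancel_left _ (Nat.succ_pos m)]
  have hgap : ∀ j j', j < j' → j' < n → ffq s n hcard j + 3 ≤ ffq s n hcard j' := by
    intro j j' hj hj'
    exact hsep _ (ffq_mem s n hcard (hj.trans hj')) _ (ffq_mem s n hcard hj')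
      (ffq_lt s n hcard hj hj')
  have hpos : ∀ j, j < n → ffpos n l j = ffq s n hcard j := by
    intro j
    induction j with
    | zero =>
      intro hj
      rw [ffpos_zero n l hj]
      have h5 := hlv (n - 1)
      have h6 : n - 1 + 1 = n := by omega
      rw [h6] at h5
      rw [h5, ffg, if_pos h6]
    | succ t ih =>
      intro hj
      have ht : t < n - 1 := by omega
      rw [ffpos_succ n l ht, ih (by omega)]
      have h5 := hlv (n - 2 - t)
      have h6 : n - 2 - t + 1 = n - 1 - t := by omega
      rw [h6] at h5
      rw [h5, ffg, if_neg (by omega : ¬ (n - 2 - t + 1 = n)),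
        if_pos (by omega : n - 2 - t + 1 < n)]
      have e1 : n - 1 - (n - 2 - t) = t + 1 := by omega
      have e2 : n - 2 - (n - 2 - t) = t := by omega
      rw [e1, e2]
      have := hgap t (t + 1) (by omega) hj
      omega
  have hsurj : ∀ x ∈ s, ∃ j, ∃ hj : j ∈ Finset.range n, ffq s n hcard j = x := by
    intro x hx
    have : x ∈ Set.range (s.orderEmbOfFin hcard) := by
      rw [Finset.range_orderEmbOfFin]
      exact hx
    obtain ⟨k, hk⟩ := this
    exact ⟨k.val, Finset.mem_range.mpr k.isLt, by rw [ffq, dif_pos k.isLt]; exact hk⟩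
  have hinj : ∀ j ∈ Finset.range n, ∀ j' ∈ Finset.range n,
      ffq s n hcard j = ffq s n hcard j' → j = j' := by
    intro j hj j' hj' hee
    rw [Finset.mem_range] at hj hj'
    by_contra hne
    rcases Nat.lt_or_ge j j' with hlt | hge
    · have := ffq_lt s n hcard hlt hj'; omega
    · have := ffq_lt s n hcard (show j' < j by omega) hj; omega
  have hbij : ∑ j ∈ Finset.range n, ffq s n hcard j = ∑ x ∈ s, x := by
    refine Finset.sum_bij (fun j hj => ffq s n hcard j)
      (fun j hj => ffq_mem s n hcard (Finset.mem_range.mp hj)) hinj ?_ (fun _ _ => rfl)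
    intro x hx
    obtain ⟨j, hj, he⟩ := hsurj x hx
    exact ⟨j, hj, he⟩
  refine ⟨l, Finsupp.support_onFinset_subset, hdvd, ?_, ?_⟩
  · rw [← ffpos_sum n l hdvd,
      Finset.sum_congr rfl (fun j hj => hpos j (Finset.mem_range.mp hj)), hbij]
    rw [Finsupp.sum] at h4
    rw [← h4]
    exact Finset.sum_congr rfl fun x hx => by rw [hval x hx, mul_one]
  · rw [ffPhi,
      Finset.sum_congr rfl (fun j hj => by rw [hpos j (Finset.mem_range.mp hj)])]
    have ha : a = ∑ x ∈ s, Finsupp.single x 1 := by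
      conv_lhs => rw [← Finsupp.sum_single a]
      rw [Finsupp.sum]
      exact Finset.sum_congr rfl fun x hx => by rw [hval x hx]
    rw [ha]
    refine Finset.sum_bij (fun j hj => ffq s n hcard j)
      (fun j hj => ffq_mem s n hcard (Finset.mem_range.mp hj)) hinj ?_ (fun _ _ => rfl)
    intro x hx
    obtain ⟨j, hj, he⟩ := hsurj x hx
    exact ⟨j, hj, he⟩

lemma geom_series (k : ℕ) (hk : 0 < k) :
    (1 - (X : PowerSeries ℂ)^k) * (mk fun m => if k ∣ m then 1 else 0) = 1 := by
  ext d
  rw [sub_mul, one_mul, map_sub, coeff_X_pow_mul']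
  simp only [coeff_mk, coeff_one]
  rcases Nat.eq_zero_or_pos d with rfl | hd
  · simp [Nat.le_zero.mpr, hk.ne']
  · rw [if_neg hd.ne']
    by_cases hkd : k ≤ d
    · rw [if_pos hkd]
      by_cases h : k ∣ d
      · rw [if_pos h, if_pos ((Nat.dvd_sub h dvd_rfl)), sub_self]
      · rw [if_neg h, if_neg, sub_self]
        intro h2
        have h3 := Nat.dvd_add h2 (dvd_refl k)
        rw [Nat.sub_add_cancel hkd] at h3
        exact h h3
    · rw [if_neg hkd, if_neg (fun h => hkd (Nat.le_of_dvd hd h)), sub_zero]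

lemma prod_geom (n : ℕ) :
    (∏ j ∈ Finset.range n, (1 - (X : PowerSeries ℂ) ^ (j + 1)))⁻¹ =
      ∏ j ∈ Finset.range n, (mk fun m => if (j+1) ∣ m then (1:ℂ) else 0) := by
  rw [PowerSeries.inv_eq_iff_mul_eq_one]
  · rw [← Finset.prod_mul_distrib]
    exact Finset.prod_eq_one fun j _ => by
      rw [mul_comm]; exact geom_series (j+1) j.succ_pos
  · rw [map_prod]
    exact Finset.prod_ne_zero_iff.mpr fun j _ => by
      simp [constantCoeff_X]

lemma coeff_prod_geom (n e : ℕ) :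
    (PowerSeries.coeff e) (∏ j ∈ Finset.range n, (1 - (X : PowerSeries ℂ) ^ (j + 1)))⁻¹ =
      ((Finset.filter (fun l => ∀ j ∈ Finset.range n, (j+1) ∣ l j)
        (Finset.finsuppAntidiag (Finset.range n) e)).card : ℂ) := by
  classical
  rw [prod_geom, PowerSeries.coeff_prod]
  simp only [coeff_mk, Finset.prod_boole]
  rw [Finset.sum_boole]

lemma card_A (n d : ℕ) :
    Set.ncard {a : ℕ →₀ ℕ |
        (∀ i, a i ≤ 1) ∧ (∀ i, a i + a (i + 1) + a (i + 2) ≤ 1) ∧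
        (a.sum fun _ v => v) = n ∧ (a.sum fun i v => i * v) = d} =
      if 3 * Nat.choose n 2 ≤ d then
        ((Finset.finsuppAntidiag (Finset.range n) (d - 3 * Nat.choose n 2)).filter
          (fun l => ∀ j ∈ Finset.range n, (j + 1) ∣ l j)).card
      else 0 := by
  set N := 3 * Nat.choose n 2 with hN
  by_cases hle : N ≤ d
  · rw [if_pos hle]
    set B := ((Finset.finsuppAntidiag (Finset.range n) (d - N)).filter
      (fun l => ∀ j ∈ Finset.range n, (j + 1) ∣ l j)) with hB
    have hBmem : ∀ l ∈ B, l.support ⊆ Finset.range n ∧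
        (∀ m ∈ Finset.range n, (m + 1) ∣ l m) ∧
        ∑ m ∈ Finset.range n, l m = d - N := by
      intro l hl
      rw [hB, Finset.mem_filter, Finset.mem_finsuppAntidiag] at hl
      exact ⟨hl.1.2, hl.2, hl.1.1⟩
    have himg : {a : ℕ →₀ ℕ |
        (∀ i, a i ≤ 1) ∧ (∀ i, a i + a (i + 1) + a (i + 2) ≤ 1) ∧
        (a.sum fun _ v => v) = n ∧ (a.sum fun i v => i * v) = d} =
        ↑(B.image (ffPhi n)) := by
      ext a
      simp only [Set.mem_setOf_eq, Finset.coe_image, Set.mem_image, Finset.mem_coe]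
      constructor
      · rintro ⟨h1, h2, h3, h4⟩
        obtain ⟨l, hs, hd2, hsum, heq⟩ := ffPhi_surj n d a h1 h2 h3 h4
        refine ⟨l, ?_, heq⟩
        rw [hB, Finset.mem_filter, Finset.mem_finsuppAntidiag]
        have he : (Finset.range n).sum ⇑l = ∑ m ∈ Finset.range n, l m := rfl
        exact ⟨⟨by omega, hs⟩, hd2⟩
      · rintro ⟨l, hl, rfl⟩
        obtain ⟨hs, hd2, hsum⟩ := hBmem l hl
        refine ⟨fun i => by have := ffPhi_cond n l i; omega,
          ffPhi_cond n l, ffPhi_sum n l, ?_⟩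
        rw [ffPhi_wsum, ffpos_sum n l hd2, hsum]
        omega
    rw [himg, Set.ncard_coe_finset]
    apply Finset.card_image_of_injOn
    intro l hl l' hl' h
    rw [Finset.mem_coe] at hl hl'
    obtain ⟨hs, hd2, _⟩ := hBmem l hl
    obtain ⟨hs', hd2', _⟩ := hBmem l' hl'
    exact ffPhi_inj n hs hs' hd2 hd2' h
  · rw [if_neg hle]
    convert Set.ncard_empty (ℕ →₀ ℕ)
    rw [Set.eq_empty_iff_forall_notMem]
    rintro a ⟨h1, h2, h3, h4⟩
    obtain ⟨l, hs, hd2, hsum, heq⟩ := ffPhi_surj n d a h1 h2 h3 h4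
    omega

/-- For `k = 1`, the character of `(1,3)`-admissible configurations
(sequences of `0`s and `1`s with `a_i + a_{i+1} + a_{i+2} ≤ 1`, i.e. no two `1`s within
distance `2`) equals `Σ_{m≥0} q^{(3m²−3m)/2} z^m / (q)_m`; stated as a power-series
identity in `q` for each fixed `z`-degree `n` (note `(3n²−3n)/2 = 3·C(n,2)`). -/
theorem fermionic_formula_13 (n : ℕ) :
    (PowerSeries.mk fun d : ℕ =>
      (Set.ncard {a : ℕ →₀ ℕ |
          (∀ i, a i ≤ 1) ∧ (∀ i, a i + a (i + 1) + a (i + 2) ≤ 1) ∧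
          (a.sum fun _ v => v) = n ∧ (a.sum fun i v => i * v) = d} : ℂ)) =
    (PowerSeries.X : PowerSeries ℂ) ^ (3 * Nat.choose n 2) *
      (∏ j ∈ Finset.range n, (1 - (PowerSeries.X : PowerSeries ℂ) ^ (j + 1)))⁻¹ := by
  ext d
  rw [coeff_mk, PowerSeries.coeff_X_pow_mul', card_A]
  by_cases hle : 3 * Nat.choose n 2 ≤ d
  · rw [if_pos hle, if_pos hle, coeff_prod_geom]
  · rw [if_neg hle, if_neg hle]
    simp
end
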